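/- arXiv:1501.02650 — 2 statements merged into one kernel-verified Lean document; each statement's English description precedes it below -/
import Mathlib

section
/- If U₁ and U₂ are subvarieties of the variety I = var{x²y = xy², x²yz = 0, xy = yx}, then ZR(U₁) ∧ U₂ = U₁ ∧ U₂ in the lattice of commutative semigroup varieties. -/
/-!
Formalization framework: semigroup varieties as Galois-closed equational theories
over the free semigroup on countably many letters.  A variety is represented by
its equational theory; the order `V ≤ W` ("V is a subvariety of W") is reverse
inclusion of theories.  `Com` is the lattice of commutative semigroup varieties,
realized as the subtype of varieties whose theory contains the commutative law.
-/

open FreeSemigroup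

/-- Words: elements of the free semigroup over a countably infinite alphabet. -/
abbrev Word : Type := FreeSemigroup ℕ

/-- A semigroup identity `u = v`. -/
abbrev SgId : Type := Word × Word

/-- `spow a n = a ^ (n + 1)` in any (multiplicative) semigroup. -/
def spow {M : Type*} [Mul M] (a : M) : ℕ → M
  | 0 => a
  | n + 1 => a * spow a n

/-- A semigroup `S` satisfies the identity `e.1 = e.2`. -/
def SatS (S : Type) [Semigroup S] (e : SgId) : Prop :=
  ∀ σ : ℕ → S, FreeSemigroup.lift σ e.1 = FreeSemigroup.lift σ e.2

/-- `S` is a model of the set of identities `E`. -/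
def Models (S : Type) [Semigroup S] (E : Set SgId) : Prop :=
  ∀ e ∈ E, SatS S e

/-- The equational theory generated by `E`: all identities holding in every
model of `E` (by Birkhoff's theorem this is exactly deductive closure). -/
def eqTh (E : Set SgId) : Set SgId :=
  { e | ∀ (S : Type) [Semigroup S], Models S E → SatS S e }

theorem subset_eqTh (E : Set SgId) : E ⊆ eqTh E := by
  intro e he S _ hS
  exact hS e he

theorem eqTh_mono {E F : Set SgId} (h : E ⊆ F) : eqTh E ⊆ eqTh F := by
  intro e he S _ hS
  exact he S fun e' he' => hS e' (h he')

theorem eqTh_idem (E : Set SgId) : eqTh (eqTh E) = eqTh E := by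
  refine Set.Subset.antisymm ?_ (subset_eqTh _)
  intro e he S _ hS
  exact he S fun e' he' => he' S hS

/-- A semigroup variety, given by its (Galois-closed) equational theory. -/
structure SgVariety where
  th : Set SgId
  closed : eqTh th = th

theorem SgVariety.ext' {V W : SgVariety} (h : V.th = W.th) : V = W := by
  cases V; cases W; cases h; rfl

/-- The variety defined by a set of identities. -/
def varOf (E : Set SgId) : SgVariety :=
  ⟨eqTh E, eqTh_idem E⟩

/-- `V ≤ W` iff `V` is a subvariety of `W`, i.e. the theory of `W` is contained
in the theory of `V`. -/
instance : PartialOrder SgVariety where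
  le V W := W.th ⊆ V.th
  le_refl V := Set.Subset.refl _
  le_trans a b c h1 h2 := Set.Subset.trans h2 h1
  le_antisymm a b h1 h2 := SgVariety.ext' (Set.Subset.antisymm h2 h1)

/-- The lattice **SEM** of all semigroup varieties: join is intersection of
theories; meet is the variety defined by the union of the theories. -/
instance : Lattice SgVariety :=
  { (inferInstance : PartialOrder SgVariety) with
    sup := fun V W =>
      ⟨V.th ∩ W.th, by
        refine Set.Subset.antisymm (Set.subset_inter ?_ ?_) (subset_eqTh _)
        · exact (eqTh_mono Set.inter_subset_left).trans (le_of_eq V.closed)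
        · exact (eqTh_mono Set.inter_subset_right).trans (le_of_eq W.closed)⟩
    le_sup_left := fun V W => Set.inter_subset_left
    le_sup_right := fun V W => Set.inter_subset_right
    sup_le := fun V W U h1 h2 => Set.subset_inter h1 h2
    inf := fun V W => varOf (V.th ∪ W.th)
    inf_le_left := fun V W => Set.subset_union_left.trans (subset_eqTh _)
    inf_le_right := fun V W => Set.subset_union_right.trans (subset_eqTh _)
    le_inf := fun U V W h1 h2 =>
      (eqTh_mono (Set.union_subset h1 h2)).trans (le_of_eq U.closed) }

/-- The letters `x`, `y`, `z`. -/
def xw : Word := FreeSemigroup.of 0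
def yw : Word := FreeSemigroup.of 1
def zw : Word := FreeSemigroup.of 2

/-- The commutative law `xy = yx`. -/
def commId : SgId := (xw * yw, yw * xw)

/-- The lattice **Com**: commutative semigroup varieties. -/
abbrev ComVariety : Type := { V : SgVariety // commId ∈ V.th }

instance : Lattice ComVariety :=
  { (inferInstance : PartialOrder ComVariety) with
    sup := fun V W => ⟨V.1 ⊔ W.1, ⟨V.2, W.2⟩⟩
    le_sup_left := fun V W => @le_sup_left SgVariety _ V.1 W.1
    le_sup_right := fun V W => @le_sup_right SgVariety _ V.1 W.1
    sup_le := fun V W U h1 h2 => @sup_le SgVariety _ V.1 W.1 U.1 h1 h2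
    inf := fun V W => ⟨V.1 ⊓ W.1, subset_eqTh _ (Set.mem_union_left _ V.2)⟩
    inf_le_left := fun V W => @inf_le_left SgVariety _ V.1 W.1
    inf_le_right := fun V W => @inf_le_right SgVariety _ V.1 W.1
    le_inf := fun U V W h1 h2 => @le_inf SgVariety _ U.1 V.1 W.1 h1 h2 }

/-- The trivial variety `T`. -/
def trivialVar : SgVariety := varOf Set.univ

/-- The variety `COM` of all commutative semigroups. -/
def COMvar : SgVariety := varOf {commId}

/-- The variety `SL` of semilattices. -/
def SLvar : SgVariety := varOf {commId, (xw * xw, xw)}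

/-- `C_m = var{xᵐ = xᵐ⁺¹, xy = yx}` for `m ≥ 1`, and `C_0 = T`. -/
def Cvar : ℕ → SgVariety
  | 0 => trivialVar
  | m + 1 => varOf {commId, (spow xw m, spow xw (m + 1))}

def Tcom : ComVariety := ⟨trivialVar, subset_eqTh _ (Set.mem_univ _)⟩
def COMcom : ComVariety := ⟨COMvar, subset_eqTh _ rfl⟩
def SLcom : ComVariety := ⟨SLvar, subset_eqTh _ (Set.mem_insert _ _)⟩
def Ccom (m : ℕ) : ComVariety :=
  ⟨Cvar m, by
    cases m with
    | zero => exact subset_eqTh _ (Set.mem_univ _)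
    | succ m => exact subset_eqTh _ (Set.mem_insert _ _)⟩

/-- A semigroup (nonempty, with the given multiplication) is a group. -/
def IsGroupS (S : Type) [Semigroup S] : Prop :=
  ∃ e : S, (∀ a : S, e * a = a ∧ a * e = a) ∧ ∀ a : S, ∃ b : S, a * b = e ∧ b * a = e

/-- A nilsemigroup: there is a zero element and some power of every element is zero. -/
def IsNilS (S : Type) [Semigroup S] : Prop :=
  ∃ z : S, (∀ a : S, z * a = z ∧ a * z = z) ∧ ∀ a : S, ∃ n : ℕ, spow a n = z

/-- A group variety: all its (nonempty) members are groups. -/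
def IsGroupVariety (V : SgVariety) : Prop :=
  ∀ (S : Type) [Semigroup S], Nonempty S → Models S V.th → IsGroupS S

/-- A nil-variety: all its (nonempty) members are nilsemigroups. -/
def IsNilVariety (V : SgVariety) : Prop :=
  ∀ (S : Type) [Semigroup S], Nonempty S → Models S V.th → IsNilS S

/-- A combinatorial variety: all groups in it are singletons. -/
def IsCombinatorial (V : SgVariety) : Prop :=
  ∀ (S : Type) [Semigroup S], Models S V.th → IsGroupS S → Subsingleton S

/-- A periodic variety: satisfies `xⁿ = xⁿ⁺ᵏ` for some `n, k ≥ 1`. -/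
def IsPeriodic (V : SgVariety) : Prop :=
  ∃ n k : ℕ, (spow xw n, spow xw (n + k + 1)) ∈ V.th

/-- The letter `k` occurs in the word `w`. -/
def occursIn (k : ℕ) (w : Word) : Prop := k = w.head ∨ k ∈ w.tail

/-- `S` satisfies the identity `w = 0` (i.e. the system `wx = xw = w`, `x` fresh):
every value of `w` in `S` is a (two-sided) zero element. -/
def SatZeroS (S : Type) [Semigroup S] (w : Word) : Prop :=
  ∀ (σ : ℕ → S) (a : S),
    FreeSemigroup.lift σ w * a = FreeSemigroup.lift σ w ∧
      a * FreeSemigroup.lift σ w = FreeSemigroup.lift σ w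

/-- The variety `V` satisfies the identity `w = 0`. -/
def VSatZero (V : SgVariety) (w : Word) : Prop :=
  ∀ (S : Type) [Semigroup S], Models S V.th → SatZeroS S w

/-- The words `x²`, `x³`, `x²y`, `xy²`, `x²yz`. -/
def w_xx : Word := xw * xw
def w_xxx : Word := xw * xw * xw
def w_xxy : Word := xw * xw * yw
def w_xyy : Word := xw * yw * yw
def w_xxyz : Word := xw * xw * yw * zw

/-- The identity `x²y = xy²`. -/
def idQ : SgId := (w_xxy, w_xyy)

/-- The pair of identities expressing `w = 0`, with `k` a fresh letter. -/
def zeroPair (w : Word) (k : ℕ) : Set SgId :=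
  {(w * FreeSemigroup.of k, w), (FreeSemigroup.of k * w, w)}

/-- `xprodTo n = x₁x₂⋯xₙ` (for `n ≥ 1`), on the letters `0, …, n-1`. -/
def xprodTo : ℕ → Word
  | 0 => FreeSemigroup.of 0
  | 1 => FreeSemigroup.of 0
  | n + 2 => xprodTo (n + 1) * FreeSemigroup.of (n + 1)

/-- `I = var{x²y = xy², x²yz = 0, xy = yx}`. -/
def Ivar : SgVariety := varOf ({commId, idQ} ∪ zeroPair w_xxyz 3)

/-- `K = var{x²y = 0, xy = yx}`. -/
def Kvar : SgVariety := varOf ({commId} ∪ zeroPair w_xxy 2)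

/-- `L = var{x² = 0, xy = yx}`. -/
def Lvar : SgVariety := varOf ({commId} ∪ zeroPair w_xx 1)

/-- `I_n = var{x²yz = x₁⋯xₙ = 0, x²y = xy², xy = yx}`. -/
def Ivarn (n : ℕ) : SgVariety :=
  varOf ({commId, idQ} ∪ zeroPair w_xxyz 3 ∪ zeroPair (xprodTo n) n)

/-- `J = var{x²yz = x³ = 0, x²y = xy², xy = yx}`. -/
def Jvar : SgVariety := varOf ({commId, idQ} ∪ zeroPair w_xxyz 3 ∪ zeroPair w_xxx 1)

/-- `J_n = var{x²yz = x³ = x₁⋯xₙ = 0, x²y = xy², xy = yx}`. -/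
def Jvarn (n : ℕ) : SgVariety :=
  varOf ({commId, idQ} ∪ zeroPair w_xxyz 3 ∪ zeroPair w_xxx 1 ∪ zeroPair (xprodTo n) n)

/-- `K_n = var{x²y = x₁⋯xₙ = 0, xy = yx}`. -/
def Kvarn (n : ℕ) : SgVariety :=
  varOf ({commId} ∪ zeroPair w_xxy 2 ∪ zeroPair (xprodTo n) n)

/-- `L_n = var{x² = x₁⋯xₙ = 0, xy = yx}`. -/
def Lvarn (n : ℕ) : SgVariety :=
  varOf ({commId} ∪ zeroPair w_xx 1 ∪ zeroPair (xprodTo n) n)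

/-- Generators of `ZR(U)`: the commutative law together with all 0-reduced
identities (in the form of the corresponding identity pairs) holding in `U`. -/
def ZRgen (U : SgVariety) : Set SgId :=
  {commId} ∪ { e : SgId | ∃ (w : Word) (k : ℕ), ¬ occursIn k w ∧ VSatZero U w ∧
      (e = (w * FreeSemigroup.of k, w) ∨ e = (FreeSemigroup.of k * w, w)) }

/-- `ZR(U)`: the variety given by the commutative law and all 0-reduced
identities holding in `U`. -/
def ZRvar (U : SgVariety) : SgVariety := varOf (ZRgen U)

def Icom : ComVariety := ⟨Ivar, subset_eqTh _ (Set.mem_union_left _ (Set.mem_insert _ _))⟩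

def ZRcom (U : SgVariety) : ComVariety :=
  ⟨ZRvar U, subset_eqTh _ (Set.mem_union_left _ rfl)⟩

/-- All nilsemigroups in `V` are nilpotent of degree ≤ n, i.e. satisfy `x₁⋯xₙ = 0`. -/
def HasDegLe (V : SgVariety) (n : ℕ) : Prop :=
  ∀ (S : Type) [Semigroup S], Nonempty S → Models S V.th → IsNilS S → SatZeroS S (xprodTo n)

/-- `deg V = d` (with `d = ⊤` meaning infinite degree). -/
def DegIs (V : SgVariety) (d : ℕ∞) : Prop :=
  (∃ n : ℕ, 0 < n ∧ d = (n : ℕ∞) ∧ IsLeast {m : ℕ | 0 < m ∧ HasDegLe V m} n) ∨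
    (d = ⊤ ∧ ∀ n : ℕ, 0 < n → ¬ HasDegLe V n)

/-- Upper-modular element of a lattice. -/
def IsUpperModular {L : Type*} [Lattice L] (a : L) : Prop :=
  ∀ b c : L, b ≤ a → a ⊓ (b ⊔ c) = b ⊔ (a ⊓ c)

/-- Codistributive element of a lattice. -/
def IsCodistributive {L : Type*} [Lattice L] (a : L) : Prop :=
  ∀ b c : L, a ⊓ (b ⊔ c) = (a ⊓ b) ⊔ (a ⊓ c)

/-- Costandard element of a lattice. -/
def IsCostandard {L : Type*} [Lattice L] (a : L) : Prop :=
  ∀ b c : L, (a ⊓ b) ⊔ c = (a ⊔ c) ⊓ (b ⊔ c)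

/-- Modular element of a lattice. -/
def IsModularElt {L : Type*} [Lattice L] (a : L) : Prop :=
  ∀ b c : L, b ≤ c → (a ⊔ b) ⊓ c = (a ⊓ c) ⊔ b

/-- Neutral element of a lattice, via the median characterization
(equivalent to: every triple containing `a` generates a distributive
sublattice; Grätzer, "Lattice Theory: Foundation", Theorem 254). -/
def IsNeutralElt {L : Type*} [Lattice L] (a : L) : Prop :=
  ∀ b c : L, (a ⊓ b) ⊔ (b ⊓ c) ⊔ (c ⊓ a) = (a ⊔ b) ⊓ (b ⊔ c) ⊓ (c ⊔ a)

namespace ZRaux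

/-- zero-element predicate -/
def IsZ {S : Type*} [Mul S] (x : S) : Prop := ∀ y, x * y = x ∧ y * x = x

theorem IsZ.unique {S : Type*} [Mul S] {x y : S} (hx : IsZ x) (hy : IsZ y) : x = y := by
  rw [← (hx y).1, (hy x).2]

theorem IsZ.mul_left {S : Type*} [Mul S] {x : S} (hx : IsZ x) (y : S) : IsZ (x * y) := by
  rw [(hx y).1]; exact hx

theorem IsZ.mul_right {S : Type*} [Mul S] {x : S} (hx : IsZ x) (y : S) : IsZ (y * x) := by
  rw [(hx y).2]; exact hx

/-- normal forms for the free semigroup of `I` -/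
inductive FI : Type
  | zero : FI
  | lin : Finset ℕ → FI
  | sq : ℕ → FI
  | cu : ℕ → FI
  | sqp : ℕ → ℕ → FI
  deriving DecidableEq

def FI.vars : FI → Finset ℕ
  | .zero => ∅
  | .lin s => s
  | .sq i => {i}
  | .cu i => {i}
  | .sqp i j => {i, j}

def FI.Good : FI → Prop
  | .lin s => s.Nonempty
  | .sqp i j => i < j
  | _ => True

/-- multiply a normal form by a generator -/
def step : FI → ℕ → FI
  | .zero, _ => .zero
  | .lin s, i =>
    if hi : i ∈ s then
      if s.card = 1 then .sq i
      else if s.card = 2 then .sqp (s.min' ⟨i, hi⟩) (s.max' ⟨i, hi⟩)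
      else .zero
    else .lin (insert i s)
  | .sq j, i => if i = j then .cu j else .sqp (min i j) (max i j)
  | .cu _, _ => .zero
  | .sqp _ _, _ => .zero

theorem step_good {a : FI} (ha : a.Good) (i : ℕ) : (step a i).Good := by
  cases a with
  | zero => trivial
  | lin s =>
    by_cases hi : i ∈ s
    · rcases eq_or_ne s.card 1 with h1 | h1
      · simp [step, hi, h1, FI.Good]
      · rcases eq_or_ne s.card 2 with h2 | h2
        · simp only [step, dif_pos hi, if_neg h1, if_pos h2, FI.Good]
          exact Finset.min'_lt_max'_of_card s (by omega)
        · simp [step, hi, h1, h2, FI.Good]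
    · simp only [step, dif_neg hi, FI.Good]
      exact Finset.insert_nonempty _ _
  | sq j =>
    rcases eq_or_ne i j with h | h
    · simp [step, h, FI.Good]
    · simp only [step, if_neg h, FI.Good]
      exact min_lt_max.2 h
  | cu j => trivial
  | sqp j k => trivial

/-- normal form of a word -/
def nf (w : Word) : FI := w.tail.foldl step (.lin {w.head})

theorem nf_of (i : ℕ) : nf (of i) = .lin {i} := rfl

theorem nf_mul_of (w : Word) (i : ℕ) : nf (w * of i) = step (nf w) i := by
  show ((w * of i).tail).foldl step (.lin {(w * of i).head}) = _
  have h1 : (w * of i).tail = w.tail ++ [i] := rfl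
  have h2 : (w * of i).head = w.head := rfl
  rw [h1, h2, List.foldl_append]
  rfl

theorem word_rec {C : Word → Prop} (h1 : ∀ i, C (of i)) (h2 : ∀ w i, C w → C (w * of i)) :
    ∀ w, C w := by
  rintro ⟨h, t⟩
  induction t using List.reverseRecOn with
  | nil => exact h1 h
  | append_singleton t i ih =>
    have : (⟨h, t ++ [i]⟩ : Word) = (⟨h, t⟩ : Word) * of i := rfl
    rw [this]; exact h2 _ _ ih

theorem nf_good : ∀ w : Word, (nf w).Good := by
  refine word_rec (fun i => ?_) (fun w i ih => ?_)
  · exact Finset.singleton_nonempty i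
  · rw [nf_mul_of]; exact step_good ih i

section Model

variable {S : Type} [CommSemigroup S]

/-- evaluation of a normal form in `WithOne S` -/
def ev (σ : ℕ → S) : FI → WithOne S
  | .zero => ↑(σ 0 * σ 0 * σ 0 * σ 0)
  | .lin s => ∏ j ∈ s, (σ j : WithOne S)
  | .sq i => ↑(σ i * σ i)
  | .cu i => ↑(σ i * σ i * σ i)
  | .sqp i j => ↑(σ i * σ i * σ j)

variable (hq : ∀ a b : S, a * a * b = a * b * b)
variable (hz : ∀ a b c : S, IsZ (a * a * b * c))

include hq in
theorem sq_swap (a b : S) : a * a * b = b * b * a := by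
  rw [hq, mul_assoc, mul_comm]

theorem prod_coe {σ : ℕ → S} {s : Finset ℕ} (hs : s.Nonempty) :
    ∃ x : S, (∏ j ∈ s, (σ j : WithOne S)) = ↑x := by
  induction hs using Finset.Nonempty.cons_induction with
  | singleton a => exact ⟨σ a, Finset.prod_singleton ..⟩
  | cons a s ha hs ih =>
    obtain ⟨x, hx⟩ := ih
    exact ⟨σ a * x, by rw [Finset.prod_cons, hx, WithOne.coe_mul]⟩

include hq hz in
theorem ev_step (σ : ℕ → S) (a : FI) (i : ℕ) :
    ev σ (step a i) = ev σ a * ↑(σ i) := by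
  have hz0 : IsZ (σ 0 * σ 0 * σ 0 * σ 0) := hz _ _ _
  cases a with
  | zero =>
    simp only [step, ev, ← WithOne.coe_mul, (hz0 (σ i)).1]
  | lin s =>
    by_cases hi : i ∈ s
    · rcases eq_or_ne s.card 1 with h1 | h1
      · obtain ⟨a, rfl⟩ := Finset.card_eq_one.1 h1
        have hia : i = a := Finset.mem_singleton.1 hi
        subst hia
        simp only [step, dif_pos hi, if_pos h1, ev, Finset.prod_singleton, WithOne.coe_mul]
      · rcases eq_or_ne s.card 2 with h2 | h2
        · -- s = {i, j}
          have hc : (s.erase i).card = 1 := by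
            rw [Finset.card_erase_of_mem hi, h2]
          obtain ⟨j, hj⟩ := Finset.card_eq_one.1 hc
          have hji : j ≠ i := by
            have : j ∈ s.erase i := hj ▸ Finset.mem_singleton_self j
            exact (Finset.mem_erase.1 this).1
          have hs' : s = insert i {j} := by
            rw [← hj, Finset.insert_erase hi]
          have hprod : (∏ k ∈ s, (σ k : WithOne S)) = ↑(σ i * σ j) := by
            rw [hs', Finset.prod_insert (by simp [hji.symm]), Finset.prod_singleton,
              WithOne.coe_mul]
          simp only [step, dif_pos hi, if_neg h1, if_pos h2, ev]
          have hmM : s.min' ⟨i, hi⟩ ≠ s.max' ⟨i, hi⟩ :=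
            ne_of_lt (Finset.min'_lt_max'_of_card s (by omega))
          have hmmem : s.min' ⟨i, hi⟩ ∈ (insert i {j} : Finset ℕ) := by
            rw [← hs']; exact s.min'_mem ⟨i, hi⟩
          have hMmem : s.max' ⟨i, hi⟩ ∈ (insert i {j} : Finset ℕ) := by
            rw [← hs']; exact s.max'_mem ⟨i, hi⟩
          rw [hprod, ← WithOne.coe_mul, WithOne.coe_inj]
          rcases Finset.mem_insert.1 hmmem with hm1 | hm1 <;>
            rcases Finset.mem_insert.1 hMmem with hM1 | hM1 <;>
              [skip;
               (simp only [Finset.mem_singleton] at hM1);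
               (simp only [Finset.mem_singleton] at hm1);
               (simp only [Finset.mem_singleton] at hm1 hM1)]
          · exact absurd (hm1.trans hM1.symm) hmM
          · rw [hm1, hM1, mul_right_comm]
          · rw [hm1, hM1, sq_swap hq, mul_right_comm]
          · exact absurd (hm1.trans hM1.symm) hmM
        · -- card ≥ 3
          have h3 : 3 ≤ s.card := by
            have : 0 < s.card := Finset.card_pos.2 ⟨i, hi⟩
            omega
          simp only [step, dif_pos hi, if_neg h1, if_neg h2, ev]
          have e1 : (σ i : WithOne S) * ∏ j ∈ s.erase i, (σ j : WithOne S)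
              = ∏ j ∈ s, (σ j : WithOne S) :=
            Finset.mul_prod_erase s (fun j => (σ j : WithOne S)) hi
          have hne1 : (s.erase i).Nonempty := by
            rw [← Finset.card_pos, Finset.card_erase_of_mem hi]; omega
          obtain ⟨j, hj⟩ := hne1
          have e2 : (σ j : WithOne S) * ∏ k ∈ (s.erase i).erase j, (σ k : WithOne S)
              = ∏ k ∈ s.erase i, (σ k : WithOne S) :=
            Finset.mul_prod_erase _ (fun k => (σ k : WithOne S)) hj
          have hne2 : ((s.erase i).erase j).Nonempty := by
            rw [← Finset.card_pos, Finset.card_erase_of_mem hj,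
              Finset.card_erase_of_mem hi]
            omega
          obtain ⟨u, hu⟩ := @prod_coe S _ σ _ hne2
          rw [hu] at e2
          rw [← e1, ← e2, ← WithOne.coe_mul, ← WithOne.coe_mul, ← WithOne.coe_mul,
            WithOne.coe_inj]
          have key : σ i * (σ j * u) * σ i = σ i * σ i * σ j * u := by
            rw [mul_right_comm, ← mul_assoc]
          rw [key]
          exact hz0.unique (hz (σ i) (σ j) u)
    · simp only [step, dif_neg hi, ev, Finset.prod_insert hi, mul_comm]
  | sq j =>
    rcases eq_or_ne i j with h | h
    · subst h
      simp [step, ev, WithOne.coe_mul]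
    · simp only [step, if_neg h, ev, ← WithOne.coe_mul, WithOne.coe_inj]
      rcases lt_or_gt_of_ne h with hij | hij
      · rw [min_eq_left hij.le, max_eq_right hij.le, sq_swap hq]
      · rw [min_eq_right hij.le, max_eq_left hij.le]
  | cu j =>
    simp only [step, ev, ← WithOne.coe_mul, WithOne.coe_inj]
    exact hz0.unique (hz (σ j) (σ j) (σ i))
  | sqp j k =>
    simp only [step, ev, ← WithOne.coe_mul, WithOne.coe_inj]
    exact hz0.unique (hz (σ j) (σ k) (σ i))

include hq hz in
theorem lift_nf (σ : ℕ → S) : ∀ w : Word,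
    (↑(FreeSemigroup.lift σ w) : WithOne S) = ev σ (nf w) := by
  refine word_rec (fun i => ?_) (fun w i ih => ?_)
  · simp [nf_of, ev, FreeSemigroup.lift_of]
  · rw [map_mul, FreeSemigroup.lift_of, WithOne.coe_mul, ih, nf_mul_of, ev_step hq hz]

theorem ev_agree {σ σ' : ℕ → S} {a : FI} (ha : a ≠ FI.zero)
    (h : ∀ t ∈ a.vars, σ t = σ' t) : ev σ a = ev σ' a := by
  cases a with
  | zero => exact absurd rfl ha
  | lin s =>
    simp only [ev]
    exact Finset.prod_congr rfl fun t ht => by rw [h t ht]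
  | sq i => simp only [ev]; rw [h i (by simp [FI.vars])]
  | cu i => simp only [ev]; rw [h i (by simp [FI.vars])]
  | sqp i j => simp only [ev]; rw [h i (by simp [FI.vars]), h j (by simp [FI.vars])]

theorem ev_zero_at (σ : ℕ → S) {a : FI} (ha : a ≠ FI.zero) {t : ℕ} (ht : t ∈ a.vars)
    (hzt : IsZ (σ t)) : ∃ x : S, ev σ a = ↑x ∧ IsZ x := by
  cases a with
  | zero => exact absurd rfl ha
  | lin s =>
    simp only [FI.vars] at ht
    have e1 : (σ t : WithOne S) * ∏ k ∈ s.erase t, (σ k : WithOne S)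
        = ∏ k ∈ s, (σ k : WithOne S) :=
      Finset.mul_prod_erase s (fun k => (σ k : WithOne S)) ht
    rcases (s.erase t).eq_empty_or_nonempty with he | he
    · refine ⟨σ t, ?_, hzt⟩
      simp only [ev]
      rw [← e1, he, Finset.prod_empty, mul_one]
    · obtain ⟨x, hx⟩ := @prod_coe S _ σ _ he
      refine ⟨σ t * x, ?_, hzt.mul_left x⟩
      simp only [ev]
      rw [← e1, hx, WithOne.coe_mul]
  | sq i =>
    have hti : t = i := by simpa [FI.vars] using ht
    subst hti
    exact ⟨σ t * σ t, rfl, hzt.mul_left _⟩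
  | cu i =>
    have hti : t = i := by simpa [FI.vars] using ht
    subst hti
    exact ⟨σ t * σ t * σ t, rfl, (hzt.mul_left _).mul_left _⟩
  | sqp i j =>
    have hti : t = i ∨ t = j := by simpa [FI.vars] using ht
    rcases hti with rfl | rfl
    · exact ⟨σ t * σ t * σ j, rfl, (hzt.mul_left _).mul_left _⟩
    · exact ⟨σ i * σ i * σ t, rfl, hzt.mul_right _⟩

include hz in
theorem caseA (h : ∀ a : S, a = a * a) (a : S) : IsZ a := by
  have h4 : IsZ (a * a * (a * a)) := by
    have := hz a a a
    rwa [mul_assoc (a * a) a a] at this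
  have e : a = a * a * (a * a) := by rw [← h (a * a), ← h a]
  rw [e]; exact h4

include hz in
theorem caseB (h : ∀ a : S, a = a * a * a) (a : S) : IsZ a := by
  have h4 : IsZ (a * a * a * a) := hz a a a
  have e2 : a * a = a * a * a * a := congrArg (fun x => x * a) (h a)
  have e : a = a * a * a * a :=
    (h a).trans ((congrArg (fun x => x * a) e2).trans ((h4 a).1))
  rw [e]; exact h4

include hz in
theorem caseC (h : ∀ a : S, a * a = a * a * a) (a : S) : IsZ (a * a) := by
  have h4 : IsZ (a * a * a * a) := hz a a a
  have e : a * a = a * a * a * a :=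
    (h a).trans (congrArg (fun x => x * a) (h a))
  rw [e]; exact h4

include hz in
theorem caseD (h : ∀ a b : S, a * b = a * a * b) (a b : S) : IsZ (a * b) := by
  have h4 : IsZ (a * a * a * a) := hz a a a
  have e3 : a * a * (a * a) * b = a * a * a * a * b :=
    congrArg (fun x => x * b) (mul_assoc (a * a) a a).symm
  have e : a * b = a * a * a * a * b := (h a b).trans ((h (a * a) b).trans e3)
  rw [e]; exact h4.mul_left b

include hq hz in
theorem side_kill {u v : Word} (hu : nf u ≠ FI.zero) (hv : nf v ≠ FI.zero)
    {t : ℕ} (htv : t ∈ (nf v).vars) (htu : t ∉ (nf u).vars)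
    (hid : ∀ τ : ℕ → S, FreeSemigroup.lift τ u = FreeSemigroup.lift τ v)
    (τ : ℕ → S) : IsZ (FreeSemigroup.lift τ u) := by
  have hzz : IsZ (τ 0 * τ 0 * τ 0 * τ 0) := hz _ _ _
  set τ' := Function.update τ t (τ 0 * τ 0 * τ 0 * τ 0) with hτ'
  have hagree : ∀ r ∈ (nf u).vars, τ r = τ' r := by
    intro r hr
    have hrt : r ≠ t := fun hrt => htu (hrt ▸ hr)
    rw [hτ', Function.update_of_ne hrt _ _]
  have hzt : IsZ (τ' t) := by
    rw [hτ', Function.update_self]; exact hzz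
  obtain ⟨x, hx, hxz⟩ := ev_zero_at τ' hv htv hzt
  have hcoe : (↑(FreeSemigroup.lift τ u) : WithOne S) = ↑x := by
    rw [lift_nf hq hz τ u, ev_agree hu hagree, ← lift_nf hq hz τ' u, hid τ',
      lift_nf hq hz τ' v, hx]
  rw [WithOne.coe_inj.1 hcoe]; exact hxz

theorem ev_lin_singleton (σ : ℕ → S) (i : ℕ) : ev σ (.lin {i}) = ↑(σ i) := by
  simp [ev]

theorem ev_lin_pair (σ : ℕ → S) {i j : ℕ} (h : i ≠ j) :
    ev σ (.lin {i, j}) = ↑(σ i * σ j) := by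
  simp only [ev]
  rw [Finset.prod_insert (by simp [h]), Finset.prod_singleton, WithOne.coe_mul]

include hq hz in
theorem both_zero {u v : Word} (hne : nf u ≠ nf v)
    (hid : ∀ τ : ℕ → S, FreeSemigroup.lift τ u = FreeSemigroup.lift τ v)
    (τ : ℕ → S) : IsZ (FreeSemigroup.lift τ u) := by
  have hgu := nf_good u
  have hgv := nf_good v
  have hbu : ∀ ρ : ℕ → S, (↑(FreeSemigroup.lift ρ u) : WithOne S) = ev ρ (nf u) :=
    fun ρ => lift_nf hq hz ρ u
  have hbv : ∀ ρ : ℕ → S, (↑(FreeSemigroup.lift ρ v) : WithOne S) = ev ρ (nf v) :=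
    fun ρ => lift_nf hq hz ρ v
  have hev : ∀ ρ : ℕ → S, ev ρ (nf u) = ev ρ (nf v) :=
    fun ρ => by rw [← hbu, hid ρ, hbv]
  by_cases hu0 : nf u = FI.zero
  · have hcoe : (↑(FreeSemigroup.lift τ u) : WithOne S) = ↑(τ 0 * τ 0 * τ 0 * τ 0) := by
      rw [hbu τ, hu0]; rfl
    rw [WithOne.coe_inj.1 hcoe]; exact hz _ _ _
  by_cases hv0 : nf v = FI.zero
  · have hcoe : (↑(FreeSemigroup.lift τ u) : WithOne S) = ↑(τ 0 * τ 0 * τ 0 * τ 0) := by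
      rw [hid τ, hbv τ, hv0]; rfl
    rw [WithOne.coe_inj.1 hcoe]; exact hz _ _ _
  by_cases hvars : (nf u).vars = (nf v).vars
  · -- equal variable sets : shape analysis
    obtain ⟨p, hp⟩ : ∃ p, nf u = p := ⟨_, rfl⟩
    obtain ⟨q, hq'⟩ : ∃ q, nf v = q := ⟨_, rfl⟩
    rw [hp] at hev hvars hu0 hgu hne hbu
    rw [hq'] at hev hvars hv0 hgv hne hbv
    clear hp hq'
    cases p with
    | zero => exact absurd rfl hu0
    | lin s =>
      cases q with
      | zero => exact absurd rfl hv0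
      | lin s' =>
        simp only [FI.vars] at hvars
        exact absurd (by rw [hvars]) hne
      | sq i' =>
        simp only [FI.vars] at hvars
        subst hvars
        have hA : ∀ a : S, a = a * a := by
          intro a
          have h := hev (fun _ => a)
          rw [ev_lin_singleton] at h
          simp only [ev] at h
          exact WithOne.coe_inj.1 h
        exact caseA hz hA _
      | cu i' =>
        simp only [FI.vars] at hvars
        subst hvars
        have hB : ∀ a : S, a = a * a * a := by
          intro a
          have h := hev (fun _ => a)
          rw [ev_lin_singleton] at h
          simp only [ev] at h
          exact WithOne.coe_inj.1 h
        exact caseB hz hB _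
      | sqp i' j' =>
        simp only [FI.vars] at hvars
        simp only [FI.Good] at hgv
        have hij : i' ≠ j' := hgv.ne
        subst hvars
        have hD : ∀ a b : S, a * b = a * a * b := by
          intro a b
          have h := hev (fun n => if n = i' then a else b)
          rw [ev_lin_pair _ hij] at h
          simp only [ev, if_pos rfl, if_neg hij.symm] at h
          exact WithOne.coe_inj.1 h
        have hcoe : (↑(FreeSemigroup.lift τ u) : WithOne S) = ↑(τ i' * τ j') := by
          rw [hbu τ, ev_lin_pair _ hij]
        rw [WithOne.coe_inj.1 hcoe]
        exact caseD hz hD _ _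
    | sq i =>
      cases q with
      | zero => exact absurd rfl hv0
      | lin s' =>
        simp only [FI.vars] at hvars
        subst hvars
        have hA : ∀ a : S, a = a * a := by
          intro a
          have h := hev (fun _ => a)
          rw [ev_lin_singleton] at h
          simp only [ev] at h
          exact (WithOne.coe_inj.1 h).symm
        exact caseA hz hA _
      | sq i' =>
        simp only [FI.vars, Finset.singleton_inj] at hvars
        exact absurd (by rw [hvars]) hne
      | cu i' =>
        simp only [FI.vars, Finset.singleton_inj] at hvars
        subst hvars
        have hC : ∀ a : S, a * a = a * a * a := by
          intro a
          have h := hev (fun _ => a)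
          simp only [ev] at h
          exact WithOne.coe_inj.1 h
        have hcoe : (↑(FreeSemigroup.lift τ u) : WithOne S) = ↑(τ i * τ i) := by
          rw [hbu τ]; rfl
        rw [WithOne.coe_inj.1 hcoe]
        exact caseC hz hC _
      | sqp i' j' =>
        simp only [FI.vars] at hvars
        simp only [FI.Good] at hgv
        have h1 : i' = i := by
          have : i' ∈ ({i} : Finset ℕ) := by rw [hvars]; simp
          simpa using this
        have h2 : j' = i := by
          have : j' ∈ ({i} : Finset ℕ) := by rw [hvars]; simp
          simpa using this
        omega
    | cu i =>
      cases q with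
      | zero => exact absurd rfl hv0
      | lin s' =>
        simp only [FI.vars] at hvars
        subst hvars
        have hB : ∀ a : S, a = a * a * a := by
          intro a
          have h := hev (fun _ => a)
          rw [ev_lin_singleton] at h
          simp only [ev] at h
          exact (WithOne.coe_inj.1 h).symm
        exact caseB hz hB _
      | sq i' =>
        simp only [FI.vars, Finset.singleton_inj] at hvars
        subst hvars
        have hC : ∀ a : S, a * a = a * a * a := by
          intro a
          have h := hev (fun _ => a)
          simp only [ev] at h
          exact (WithOne.coe_inj.1 h).symm
        have hcoe : (↑(FreeSemigroup.lift τ u) : WithOne S) = ↑(τ i * τ i * τ i) := by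
          rw [hbu τ]; rfl
        rw [WithOne.coe_inj.1 hcoe]
        have h4 : IsZ (τ i * τ i) := caseC hz hC (τ i)
        exact h4.mul_left _
      | cu i' =>
        simp only [FI.vars, Finset.singleton_inj] at hvars
        exact absurd (by rw [hvars]) hne
      | sqp i' j' =>
        simp only [FI.vars] at hvars
        simp only [FI.Good] at hgv
        have h1 : i' = i := by
          have : i' ∈ ({i} : Finset ℕ) := by rw [hvars]; simp
          simpa using this
        have h2 : j' = i := by
          have : j' ∈ ({i} : Finset ℕ) := by rw [hvars]; simp
          simpa using this
        omega
    | sqp i j =>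
      simp only [FI.Good] at hgu
      have hij : i ≠ j := hgu.ne
      cases q with
      | zero => exact absurd rfl hv0
      | lin s' =>
        simp only [FI.vars] at hvars
        have hD : ∀ a b : S, a * b = a * a * b := by
          intro a b
          have h := hev (fun n => if n = i then a else b)
          rw [← hvars, ev_lin_pair _ hij] at h
          simp only [ev, if_pos rfl, if_neg hij.symm] at h
          exact (WithOne.coe_inj.1 h).symm
        have hcoe : (↑(FreeSemigroup.lift τ u) : WithOne S) = ↑(τ i * τ j) := by
          rw [hid τ, hbv τ, ← hvars, ev_lin_pair _ hij]
        rw [WithOne.coe_inj.1 hcoe]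
        exact caseD hz hD _ _
      | sq i' =>
        simp only [FI.vars] at hvars
        have h1 : i = i' := by
          have : i ∈ ({i'} : Finset ℕ) := by rw [← hvars]; simp
          simpa using this
        have h2 : j = i' := by
          have : j ∈ ({i'} : Finset ℕ) := by rw [← hvars]; simp
          simpa using this
        omega
      | cu i' =>
        simp only [FI.vars] at hvars
        have h1 : i = i' := by
          have : i ∈ ({i'} : Finset ℕ) := by rw [← hvars]; simp
          simpa using this
        have h2 : j = i' := by
          have : j ∈ ({i'} : Finset ℕ) := by rw [← hvars]; simp
          simpa using this
        omega
      | sqp i' j' =>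
        simp only [FI.vars] at hvars
        simp only [FI.Good] at hgv
        have m1 : i = i' ∨ i = j' := by
          have : i ∈ ({i', j'} : Finset ℕ) := by rw [← hvars]; simp
          simpa using this
        have m2 : j = i' ∨ j = j' := by
          have : j ∈ ({i', j'} : Finset ℕ) := by rw [← hvars]; simp
          simpa using this
        have m3 : i' = i ∨ i' = j := by
          have : i' ∈ ({i, j} : Finset ℕ) := by rw [hvars]; simp
          simpa using this
        have m4 : j' = i ∨ j' = j := by
          have : j' ∈ ({i, j} : Finset ℕ) := by rw [hvars]; simp
          simpa using this
        have hii : i = i' ∧ j = j' := by omega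
        exact absurd (by rw [hii.1, hii.2]) hne
  · -- different variable sets
    have hex : ∃ t, (t ∈ (nf v).vars ∧ t ∉ (nf u).vars) ∨
        (t ∈ (nf u).vars ∧ t ∉ (nf v).vars) := by
      by_contra hcon
      push_neg at hcon
      apply hvars
      ext t
      exact ⟨(hcon t).2, (hcon t).1⟩
    rcases hex with ⟨t, ⟨htv, htu⟩ | ⟨htu, htv⟩⟩
    · exact side_kill hq hz hu0 hv0 htv htu hid τ
    · have h := side_kill hq hz hv0 hu0 htu htv (fun ρ => (hid ρ).symm) τ
      rw [hid τ]; exact h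

end Model

end ZRaux

-- ## Auxiliary lemmas about occurrences and fresh letters

theorem occursIn_mul_of {t : ℕ} {w : Word} {i : ℕ} (h : occursIn t w) :
    occursIn t (w * FreeSemigroup.of i) := by
  rcases h with h | h
  · exact Or.inl h
  · exact Or.inr (List.mem_append.2 (Or.inl h))

theorem occursIn_mul_of_self (w : Word) (i : ℕ) : occursIn i (w * FreeSemigroup.of i) :=
  Or.inr (List.mem_append.2 (Or.inr (List.mem_singleton.2 rfl)))

theorem lift_occurs {S : Type} [Semigroup S] {σ σ' : ℕ → S} : ∀ w : Word,
    (∀ t, occursIn t w → σ t = σ' t) →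
    FreeSemigroup.lift σ w = FreeSemigroup.lift σ' w := by
  refine ZRaux.word_rec (fun i h => ?_) (fun w i ih h => ?_)
  · simpa using h i (Or.inl rfl)
  · rw [map_mul, map_mul, FreeSemigroup.lift_of, FreeSemigroup.lift_of,
      ih (fun t ht => h t (occursIn_mul_of ht)), h i (occursIn_mul_of_self w i)]

theorem exists_fresh (w : Word) : ∃ k, ¬ occursIn k w := by
  obtain ⟨k, hk⟩ := Infinite.exists_notMem_finset (insert w.head w.tail.toFinset)
  refine ⟨k, fun h => hk ?_⟩
  rcases h with h | h
  · simp [h]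
  · simp [h]

-- ## Extracting the identities of `I` in a model

theorem models_comm {S : Type} [Semigroup S] (h : SatS S commId) :
    ∀ a b : S, a * b = b * a := by
  intro a b
  have := h (fun n => if n = 0 then a else b)
  simpa [commId, xw, yw] using this

theorem models_q {S : Type} [Semigroup S] (h : SatS S idQ) :
    ∀ a b : S, a * a * b = a * b * b := by
  intro a b
  have := h (fun n => if n = 0 then a else b)
  simpa [idQ, w_xxy, w_xyy, xw, yw] using this

theorem models_z {S : Type} [Semigroup S]
    (h1 : SatS S (w_xxyz * FreeSemigroup.of 3, w_xxyz))
    (h2 : SatS S (FreeSemigroup.of 3 * w_xxyz, w_xxyz)) :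
    ∀ a b c : S, ZRaux.IsZ (a * a * b * c) := by
  intro a b c d
  constructor
  · have := h1 (fun n => if n = 0 then a else if n = 1 then b else if n = 2 then c else d)
    simpa [w_xxyz, xw, yw, zw] using this
  · have := h2 (fun n => if n = 0 then a else if n = 1 then b else if n = 2 then c else d)
    simpa [w_xxyz, xw, yw, zw] using this

theorem commId_mem_I : commId ∈ Ivar.th :=
  subset_eqTh _ (Set.mem_union_left _ (Set.mem_insert _ _))

theorem idQ_mem_I : idQ ∈ Ivar.th :=
  subset_eqTh _ (Set.mem_union_left _ (Set.mem_insert_of_mem _ rfl))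

theorem zp1_mem_I : (w_xxyz * FreeSemigroup.of 3, w_xxyz) ∈ Ivar.th :=
  subset_eqTh _ (Set.mem_union_right _ (Set.mem_insert _ _))

theorem zp2_mem_I : (FreeSemigroup.of 3 * w_xxyz, w_xxyz) ∈ Ivar.th :=
  subset_eqTh _ (Set.mem_union_right _ (Set.mem_insert_of_mem _ rfl))

-- ## The core semantic lemma

theorem core_mem {U₁ U₂ : SgVariety} (h1' : Ivar.th ⊆ U₁.th) (h2' : Ivar.th ⊆ U₂.th)
    {e : SgId} (he : e ∈ U₁.th) : e ∈ eqTh ((ZRvar U₁).th ∪ U₂.th) := by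
  obtain ⟨u, v⟩ := e
  intro S _ hS σ
  have hS2 : ∀ e' ∈ U₂.th, SatS S e' := fun e' he' => hS e' (Set.mem_union_right _ he')
  have hSI : ∀ e' ∈ Ivar.th, SatS S e' := fun e' he' => hS2 e' (h2' he')
  have hcomm := models_comm (hSI commId commId_mem_I)
  have hq := models_q (hSI idQ idQ_mem_I)
  have hz := models_z (hSI _ zp1_mem_I) (hSI _ zp2_mem_I)
  letI : CommSemigroup S := { (inferInstance : Semigroup S) with mul_comm := hcomm }
  by_cases hnf : ZRaux.nf u = ZRaux.nf v
  · have b1 := ZRaux.lift_nf hq hz σ u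
    have b2 := ZRaux.lift_nf hq hz σ v
    rw [hnf] at b1
    exact WithOne.coe_inj.1 (b1.trans b2.symm)
  · -- the two sides are 0-reduced identities of `U₁`
    have hvz_u : VSatZero U₁ u := by
      intro T _ hT
      have hTI : ∀ e' ∈ Ivar.th, SatS T e' := fun e' he' => hT e' (h1' he')
      have hcommT := models_comm (hTI commId commId_mem_I)
      have hqT := models_q (hTI idQ idQ_mem_I)
      have hzT := models_z (hTI _ zp1_mem_I) (hTI _ zp2_mem_I)
      letI : CommSemigroup T := { (inferInstance : Semigroup T) with mul_comm := hcommT }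
      have hidT : ∀ τ : ℕ → T, FreeSemigroup.lift τ u = FreeSemigroup.lift τ v :=
        fun τ => hT (u, v) he τ
      intro τ a
      exact ZRaux.both_zero hqT hzT hnf hidT τ a
    have hvz_v : VSatZero U₁ v := by
      intro T _ hT
      have hTI : ∀ e' ∈ Ivar.th, SatS T e' := fun e' he' => hT e' (h1' he')
      have hcommT := models_comm (hTI commId commId_mem_I)
      have hqT := models_q (hTI idQ idQ_mem_I)
      have hzT := models_z (hTI _ zp1_mem_I) (hTI _ zp2_mem_I)
      letI : CommSemigroup T := { (inferInstance : Semigroup T) with mul_comm := hcommT }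
      have hidT : ∀ τ : ℕ → T, FreeSemigroup.lift τ v = FreeSemigroup.lift τ u :=
        fun τ => (hT (u, v) he τ).symm
      intro τ a
      exact ZRaux.both_zero hqT hzT (Ne.symm hnf) hidT τ a
    obtain ⟨k, hk⟩ := exists_fresh u
    obtain ⟨k', hk'⟩ := exists_fresh v
    have m1 : (u * FreeSemigroup.of k, u) ∈ ZRgen U₁ :=
      Set.mem_union_right _ ⟨u, k, hk, hvz_u, Or.inl rfl⟩
    have m2 : (FreeSemigroup.of k * u, u) ∈ ZRgen U₁ :=
      Set.mem_union_right _ ⟨u, k, hk, hvz_u, Or.inr rfl⟩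
    have m3 : (v * FreeSemigroup.of k', v) ∈ ZRgen U₁ :=
      Set.mem_union_right _ ⟨v, k', hk', hvz_v, Or.inl rfl⟩
    have m4 : (FreeSemigroup.of k' * v, v) ∈ ZRgen U₁ :=
      Set.mem_union_right _ ⟨v, k', hk', hvz_v, Or.inr rfl⟩
    have sm1 := hS _ (Set.mem_union_left _ (subset_eqTh _ m1))
    have sm2 := hS _ (Set.mem_union_left _ (subset_eqTh _ m2))
    have sm3 := hS _ (Set.mem_union_left _ (subset_eqTh _ m3))
    have sm4 := hS _ (Set.mem_union_left _ (subset_eqTh _ m4))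
    have hupdate : ∀ a : S, FreeSemigroup.lift (Function.update σ k a) u
        = FreeSemigroup.lift σ u := fun a =>
      lift_occurs u (fun t ht =>
        Function.update_of_ne (fun htk => hk (by rw [← htk]; exact ht)) _ _)
    have hupdate' : ∀ a : S, FreeSemigroup.lift (Function.update σ k' a) v
        = FreeSemigroup.lift σ v := fun a =>
      lift_occurs v (fun t ht =>
        Function.update_of_ne (fun htk => hk' (by rw [← htk]; exact ht)) _ _)
    have hZu : ZRaux.IsZ (FreeSemigroup.lift σ u) := by
      intro a
      constructor
      · have h := sm1 (Function.update σ k a)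
        rw [map_mul, FreeSemigroup.lift_of, Function.update_self, hupdate a] at h
        exact h
      · have h := sm2 (Function.update σ k a)
        rw [map_mul, FreeSemigroup.lift_of, Function.update_self, hupdate a] at h
        exact h
    have hZv : ZRaux.IsZ (FreeSemigroup.lift σ v) := by
      intro a
      constructor
      · have h := sm3 (Function.update σ k' a)
        rw [map_mul, FreeSemigroup.lift_of, Function.update_self, hupdate' a] at h
        exact h
      · have h := sm4 (Function.update σ k' a)
        rw [map_mul, FreeSemigroup.lift_of, Function.update_self, hupdate' a] at h
        exact h
    exact ((hZu (FreeSemigroup.lift σ v)).1).symm.trans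
      ((hZv (FreeSemigroup.lift σ u)).2)

/-- Lemma `eliminate ZR` of the paper.  If `U₁, U₂ ⊆ I`,
then `ZR(U₁) ∧ U₂ = U₁ ∧ U₂` in the lattice of commutative semigroup
varieties. -/
theorem ZR_meet (U₁ U₂ : ComVariety) (h1 : U₁ ≤ Icom) (h2 : U₂ ≤ Icom) :
    ZRcom U₁.1 ⊓ U₂ = U₁ ⊓ U₂ := by
  have h1' : Ivar.th ⊆ U₁.1.th := h1
  have h2' : Ivar.th ⊆ U₂.1.th := h2
  apply le_antisymm
  · -- hard direction
    show (U₁ ⊓ U₂).1.th ⊆ (ZRcom U₁.1 ⊓ U₂).1.th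
    have hsub : U₁.1.th ∪ U₂.1.th ⊆ eqTh ((ZRvar U₁.1).th ∪ U₂.1.th) := by
      rintro e (he | he)
      · exact core_mem h1' h2' he
      · exact subset_eqTh _ (Set.mem_union_right _ he)
    intro e he
    have := eqTh_mono hsub he
    rwa [eqTh_idem] at this
  · -- easy direction
    have hle : U₁ ≤ ZRcom U₁.1 := by
      show (ZRvar U₁.1).th ⊆ U₁.1.th
      intro e he
      rw [← U₁.1.closed]
      refine eqTh_mono ?_ he
      rintro e' (he' | ⟨w, k, hk, hw, rfl | rfl⟩)
      · rw [Set.mem_singleton_iff] at he'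
        subst he'
        exact h1' commId_mem_I
      · rw [← U₁.1.closed]
        intro T _ hT τ
        rw [map_mul, FreeSemigroup.lift_of]
        exact ((hw T hT) τ (τ k)).1
      · rw [← U₁.1.closed]
        intro T _ hT τ
        rw [map_mul, FreeSemigroup.lift_of]
        exact ((hw T hT) τ (τ k)).2
    exact inf_le_inf_right U₂ hle
end

section
/- A commutative semigroup variety V is an upper-modular element of the lattice Com if and only if V ∨ SL is an upper-modular element of Com; likewise, V is a costandard element of Com if and only if V ∨ SL is a costandard element of Com. -/
/-!
Formalization framework: semigroup varieties as Galois-closed equational theories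
over the free semigroup on countably many letters.  A variety is represented by
its equational theory; the order `V ≤ W` ("V is a subvariety of W") is reverse
inclusion of theories.  `Com` is the lattice of commutative semigroup varieties,
realized as the subtype of varieties whose theory contains the commutative law.
-/

open FreeSemigroup

/-!
In **Com**, `SL` is an atom: a commutative variety not containing `SL` satisfies an identity
`u = v` with a letter `k` of `u` missing in `v`, and together with `x² = x` this forces `x = y`.
It is also join-prime, and `X ∧ (Y ∨ SL) = (X ∧ Y) ∨ (X ∧ SL)` for all `X, Y`. For an element `s`
with these three properties, `x ↦ (s ≤ x, x ∨ s)` is a lattice embedding of `L` into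
`Prop × [s, ⊤)`, so `a` is upper-modular (costandard) iff `a ∨ s` is upper-modular (costandard)
in `[s, ⊤)`; this condition does not change when `a` is replaced by `a ∨ s`.

The distributive law is where the semigroup theory lies. If `SL ⊄ X`, substituting `k ↦ xy` and
`y` elsewhere in `u = v` gives `xᵃyᵇ = yᵐ`, whence `xᵃyᵐ = yᵐ`; from this law the regular
identities of `Y` (those with both sides of equal content) imply all of `Y`. If `SL ⊆ X`, a
derivation of a regular identity `p = q` from `X ∪ Y` is followed with all words multiplied by a
power of `p`: the padded steps are then regular, and the unpadded words of full content are tied to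
`p` because the step that leaves full content lets them absorb powers of `p`.
-/

section NeutralAtom

variable {L : Type*} [Lattice L] {s : L}

theorem inf_sup_eq_of_le (hd : ∀ x y : L, x ⊓ (y ⊔ s) = x ⊓ y ⊔ x ⊓ s) {x y : L} (hy : s ≤ y) :
    y ⊓ (x ⊔ s) = y ⊓ x ⊔ s := by
  rw [hd, inf_eq_right.2 hy]

theorem sup_inf_right_of_forall_inf_sup (hd : ∀ x y : L, x ⊓ (y ⊔ s) = x ⊓ y ⊔ x ⊓ s) (x y : L) :
    x ⊓ y ⊔ s = (x ⊔ s) ⊓ (y ⊔ s) := by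
  refine le_antisymm
    (sup_le (inf_le_inf le_sup_left le_sup_left) (le_inf le_sup_right le_sup_right)) ?_
  calc (x ⊔ s) ⊓ (y ⊔ s) = x ⊓ (y ⊔ s) ⊔ s := by
        rw [inf_comm, inf_sup_eq_of_le hd le_sup_right, inf_comm]
    _ = x ⊓ y ⊔ x ⊓ s ⊔ s := by rw [hd]
    _ ≤ x ⊓ y ⊔ s := sup_le (sup_le_sup_left inf_le_right _) le_sup_right

theorem eq_of_le_iff_of_sup_eq [OrderBot L] (hd : ∀ x y : L, x ⊓ (y ⊔ s) = x ⊓ y ⊔ x ⊓ s)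
    (hs : IsAtom s) {x y : L} (hle : s ≤ x ↔ s ≤ y) (hsup : x ⊔ s = y ⊔ s) : x = y := by
  have key : ∀ {x y : L}, (s ≤ x ↔ s ≤ y) → x ⊔ s = y ⊔ s → x ≤ y := by
    intro x y hle hsup
    have hxs : x ⊓ s ≤ y := by
      rcases hs.le_iff.1 (inf_le_right : x ⊓ s ≤ s) with h | h
      · exact h ▸ bot_le
      · exact inf_le_right.trans (hle.1 (h ▸ inf_le_left))
    calc x = x ⊓ (y ⊔ s) := by rw [← hsup, inf_sup_self]
      _ = x ⊓ y ⊔ x ⊓ s := hd x y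
      _ ≤ y := sup_le inf_le_right hxs
  exact le_antisymm (key hle hsup) (key hle.symm hsup.symm)

theorem isUpperModular_iff_Ici [OrderBot L] (hd : ∀ x y : L, x ⊓ (y ⊔ s) = x ⊓ y ⊔ x ⊓ s)
    (hs : IsAtom s) (hp : SupPrime s) (a : L) :
    IsUpperModular a ↔ IsUpperModular (⟨a ⊔ s, le_sup_right⟩ : Set.Ici s) := by
  constructor
  · rintro h ⟨b, hb⟩ ⟨c, hc⟩ hba
    replace hba : b ≤ a ⊔ s := hba
    apply Subtype.ext
    simp only [Set.Ici.coe_inf, Set.Ici.coe_sup]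
    have hb' : b ⊓ a ⊔ s = b := by rw [← inf_sup_eq_of_le hd hb, inf_eq_left.2 hba]
    have hbc : b ⊓ a ⊔ c = b ⊔ c := by
      calc b ⊓ a ⊔ c = b ⊓ a ⊔ s ⊔ c := by rw [sup_assoc, sup_eq_right.2 hc]
        _ = b ⊔ c := by rw [hb']
    calc (a ⊔ s) ⊓ (b ⊔ c) = a ⊓ (b ⊔ c) ⊔ s := by
          rw [sup_inf_right_of_forall_inf_sup hd, sup_eq_left.2 (le_sup_of_le_right hc)]
      _ = b ⊓ a ⊔ s ⊔ (a ⊓ c ⊔ s) := by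
          rw [← hbc, h _ _ inf_le_right, sup_sup_distrib_right]
      _ = b ⊔ (a ⊔ s) ⊓ c := by rw [hb', sup_inf_right_of_forall_inf_sup hd, sup_eq_left.2 hc]
  · intro h b c hba
    apply eq_of_le_iff_of_sup_eq hd hs
    · have : s ≤ b → s ≤ a := fun h => h.trans hba
      simp only [le_inf_iff, hp.le_sup]
      tauto
    · have := congrArg Subtype.val
        (h ⟨b ⊔ s, le_sup_right⟩ ⟨c ⊔ s, le_sup_right⟩ (sup_le_sup_right hba s))
      simp only [Set.Ici.coe_inf, Set.Ici.coe_sup] at this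
      rw [sup_inf_right_of_forall_inf_sup hd, sup_sup_distrib_right, this,
        ← sup_inf_right_of_forall_inf_sup hd a c, ← sup_sup_distrib_right]

theorem isCostandard_iff_Ici [OrderBot L] (hd : ∀ x y : L, x ⊓ (y ⊔ s) = x ⊓ y ⊔ x ⊓ s)
    (hs : IsAtom s) (hp : SupPrime s) (a : L) :
    IsCostandard a ↔ IsCostandard (⟨a ⊔ s, le_sup_right⟩ : Set.Ici s) := by
  constructor
  · rintro h ⟨b, hb⟩ ⟨c, hc⟩
    apply Subtype.ext
    simp only [Set.Ici.coe_inf, Set.Ici.coe_sup]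
    rw [inf_comm, inf_sup_eq_of_le hd hb, sup_assoc, sup_eq_right.2 hc, sup_assoc,
      sup_eq_right.2 hc, inf_comm, h]
  · intro h b c
    apply eq_of_le_iff_of_sup_eq hd hs
    · simp only [le_inf_iff, hp.le_sup]
      tauto
    · have := congrArg Subtype.val (h ⟨b ⊔ s, le_sup_right⟩ ⟨c ⊔ s, le_sup_right⟩)
      simp only [Set.Ici.coe_inf, Set.Ici.coe_sup] at this
      rw [sup_sup_distrib_right, sup_inf_right_of_forall_inf_sup hd, this, ← sup_sup_distrib_right,
        ← sup_sup_distrib_right, sup_inf_right_of_forall_inf_sup hd]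

theorem isUpperModular_and_isCostandard_sup_iff [OrderBot L]
    (hd : ∀ x y : L, x ⊓ (y ⊔ s) = x ⊓ y ⊔ x ⊓ s) (hs : IsAtom s) (hp : SupPrime s) (a : L) :
    (IsUpperModular a ↔ IsUpperModular (a ⊔ s)) ∧ (IsCostandard a ↔ IsCostandard (a ⊔ s)) := by
  have hss : (⟨a ⊔ s ⊔ s, le_sup_right⟩ : Set.Ici s) = ⟨a ⊔ s, le_sup_right⟩ :=
    Subtype.ext (sup_right_idem ..)
  rw [isUpperModular_iff_Ici hd hs hp, isUpperModular_iff_Ici hd hs hp (a ⊔ s), hss,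
    isCostandard_iff_Ici hd hs hp, isCostandard_iff_Ici hd hs hp (a ⊔ s), hss]
  exact ⟨Iff.rfl, Iff.rfl⟩

end NeutralAtom

namespace Word

def letters (w : Word) : List ℕ := w.head :: w.tail

@[simp] theorem letters_mul (u v : Word) : letters (u * v) = letters u ++ letters v := rfl

@[simp] theorem letters_of (n : ℕ) : letters (of n) = [n] := rfl

def content (w : Word) : Finset ℕ := (letters w).toFinset

@[simp] theorem mem_content {a : ℕ} {w : Word} : a ∈ content w ↔ a ∈ letters w :=
  List.mem_toFinset

@[simp] theorem content_mul (u v : Word) : content (u * v) = content u ∪ content v := by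
  simp [content]

@[simp] theorem content_of (n : ℕ) : content (of n) = {n} := rfl

theorem content_nonempty (w : Word) : (content w).Nonempty := ⟨w.head, by simp [letters]⟩

@[simp] theorem content_spow (w : Word) (n : ℕ) : content (spow w n) = content w := by
  induction n with
  | zero => rfl
  | succ n ih => rw [spow, content_mul, ih, Finset.union_self]

theorem mem_content_lift {θ : ℕ → Word} {w : Word} {a : ℕ} :
    a ∈ content (lift θ w) ↔ ∃ l ∈ content w, a ∈ content (θ l) := by
  induction w using FreeSemigroup.recOnMul with
  | ih1 x => simp
  | ih2 x y hx hy => simp only [map_mul, content_mul, Finset.mem_union, hx, hy]; grind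

theorem lift_eq_self {θ : ℕ → Word} {w : Word} (h : ∀ l ∈ content w, θ l = of l) :
    lift θ w = w := by
  induction w using FreeSemigroup.recOnMul with
  | ih1 x => simpa using h x
  | ih2 x y hx hy =>
      simp only [content_mul, Finset.mem_union] at h
      rw [map_mul, hx fun l hl => h l (.inl hl), hy fun l hl => h l (.inr hl)]

end Word

open Word

theorem lift_lift {T : Type*} [Semigroup T] (σ : ℕ → T) (θ : ℕ → Word) (w : Word) :
    lift σ (lift θ w) = lift (fun l => lift σ (θ l)) w := by
  induction w using FreeSemigroup.recOnMul with
  | ih1 x => simp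
  | ih2 x y hx hy => simp only [map_mul, hx, hy]

theorem lift_spow {T : Type*} [Semigroup T] (σ : ℕ → T) (w : Word) (n : ℕ) :
    lift σ (spow w n) = spow (lift σ w) n := by
  induction n with
  | zero => rfl
  | succ n ih => rw [spow, spow, map_mul, ih]

theorem lift_eq_prod {M : Type*} [Monoid M] (σ : ℕ → M) (w : Word) :
    lift σ w = ((letters w).map σ).prod := by
  induction w using FreeSemigroup.recOnMul with
  | ih1 x => simp
  | ih2 x y hx hy => simp only [map_mul, hx, hy, letters_mul, List.map_append, List.prod_append]

theorem coe_lift {T : Type*} [Semigroup T] (σ : ℕ → T) (w : Word) :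
    ((lift σ w : T) : WithOne T) = lift (fun l => (σ l : WithOne T)) w := by
  induction w using FreeSemigroup.recOnMul with
  | ih1 x => simp
  | ih2 x y hx hy => simp only [map_mul, WithOne.coe_mul, hx, hy]

theorem coe_lift_eq_prod {T : Type*} [Semigroup T] (σ : ℕ → T) (w : Word) :
    ((lift σ w : T) : WithOne T) = ((letters w).map fun l => (σ l : WithOne T)).prod := by
  rw [coe_lift, lift_eq_prod]

theorem coe_spow {T : Type*} [Semigroup T] (a : T) (n : ℕ) :
    ((spow a n : T) : WithOne T) = (a : WithOne T) ^ (n + 1) := by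
  induction n with
  | zero => simp [spow]
  | succ n ih => rw [spow, WithOne.coe_mul, ih, ← pow_succ']

section Theories

variable {E : Set SgId} {p q r : Word}

theorem eqTh_symm (h : (p, q) ∈ eqTh E) : (q, p) ∈ eqTh E :=
  fun S _ hS σ => (h S hS σ).symm

theorem eqTh_trans (h₁ : (p, q) ∈ eqTh E) (h₂ : (q, r) ∈ eqTh E) : (p, r) ∈ eqTh E :=
  fun S _ hS σ => (h₁ S hS σ).trans (h₂ S hS σ)

theorem eqTh_refl (p : Word) : (p, p) ∈ eqTh E :=
  fun _ _ _ _ => rfl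

theorem eqTh_mul {p' q' : Word} (h : (p, q) ∈ eqTh E) (h' : (p', q') ∈ eqTh E) :
    (p * p', q * q') ∈ eqTh E := by
  intro S _ hS σ
  simp only [map_mul, h S hS σ, h' S hS σ]

theorem eqTh_subst (h : (p, q) ∈ eqTh E) (θ : ℕ → Word) : (lift θ p, lift θ q) ∈ eqTh E := by
  intro S _ hS σ
  simp only [lift_lift]
  exact h S hS _

namespace SgVariety

variable {V : SgVariety}

theorem mem_th {e : SgId} : e ∈ V.th ↔ ∀ (T : Type) [Semigroup T], Models T V.th → SatS T e := by
  conv_lhs => rw [← V.closed]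
  rfl

theorem symm_mem (h : (p, q) ∈ V.th) : (q, p) ∈ V.th := by
  rw [← V.closed] at h ⊢
  exact eqTh_symm h

theorem trans_mem (h₁ : (p, q) ∈ V.th) (h₂ : (q, r) ∈ V.th) : (p, r) ∈ V.th := by
  rw [← V.closed] at h₁ h₂ ⊢
  exact eqTh_trans h₁ h₂

theorem mul_mem {p' q' : Word} (h : (p, q) ∈ V.th) (h' : (p', q') ∈ V.th) :
    (p * p', q * q') ∈ V.th := by
  rw [← V.closed] at h h' ⊢
  exact eqTh_mul h h'

theorem refl_mem (p : Word) : (p, p) ∈ V.th :=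
  V.closed ▸ eqTh_refl p

theorem lift_mem (h : (p, q) ∈ V.th) (θ : ℕ → Word) : (lift θ p, lift θ q) ∈ V.th := by
  rw [← V.closed] at h ⊢
  exact eqTh_subst h θ

end SgVariety

end Theories

theorem SatS.mul_comm {T : Type} [Semigroup T] (h : SatS T commId) (x y : T) : x * y = y * x := by
  simpa [commId, xw, yw] using h fun n => if n = 0 then x else y

abbrev SatS.commSemigroup {T : Type} [Semigroup T] (h : SatS T commId) : CommSemigroup T :=
  { ‹Semigroup T› with mul_comm := h.mul_comm }

theorem SatS.mul_self {T : Type} [Semigroup T] (h : SatS T (xw * xw, xw)) (x : T) : x * x = x := by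
  simpa [xw] using h fun _ => x

theorem prod_letters_eq_prod_content {M : Type*} [CommMonoid M] (f : ℕ → M)
    (hf : ∀ l, IsIdempotentElem (f l)) (w : Word) :
    ((letters w).map f).prod = ∏ l ∈ content w, f l := by
  rw [content, ← Multiset.prod_coe, ← Multiset.map_coe, Finset.prod_multiset_map_count,
    List.toFinset_coe]
  refine Finset.prod_congr rfl fun l hl => ?_
  obtain ⟨n, hn⟩ := Nat.exists_eq_add_of_lt (Multiset.count_pos.2 (Multiset.mem_toFinset.1 hl))
  rw [hn, zero_add, (hf l).pow_succ_eq]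

theorem satS_of_content_eq {T : Type} [CommSemigroup T] (hidem : ∀ x : T, x * x = x)
    {p q : Word} (h : content p = content q) : SatS T (p, q) := by
  intro σ
  have hf : ∀ l, IsIdempotentElem (σ l : WithOne T) := fun l => by
    rw [IsIdempotentElem, ← WithOne.coe_mul, hidem]
  apply WithOne.coe_injective
  simp only [coe_lift_eq_prod, prod_letters_eq_prod_content _ hf, h]

def regularIds : Set SgId := {e | content e.1 = content e.2}

@[simp] theorem mem_regularIds {p q : Word} : (p, q) ∈ regularIds ↔ content p = content q :=
  Iff.rfl

theorem satS_commId_of_models_SLvar {T : Type} [Semigroup T] (hT : Models T SLvar.th) :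
    SatS T commId :=
  hT _ (subset_eqTh _ (by simp))

theorem mul_self_of_models_SLvar {T : Type} [Semigroup T] (hT : Models T SLvar.th) (x : T) :
    x * x = x :=
  SatS.mul_self (hT _ (subset_eqTh _ (by simp))) x

theorem models_regularIds_of_models_SLvar {T : Type} [Semigroup T] (hT : Models T SLvar.th) :
    Models T regularIds := by
  let := (satS_commId_of_models_SLvar hT).commSemigroup
  exact fun e he => satS_of_content_eq (mul_self_of_models_SLvar hT) he

theorem th_SLvar : SLvar.th = regularIds := by
  refine Set.Subset.antisymm (fun ⟨p, q⟩ h => ?_) fun e he T _ hT =>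
    models_regularIds_of_models_SLvar (fun e' he' => he' T hT) e he
  -- in the two-element semilattice `{0, 1} ⊆ ZMod 2`, the value of `w` is `0` iff `a ∈ c(w)`
  have hZ : Models (ZMod 2) {commId, (xw * xw, xw)} := by
    rintro e (rfl | rfl) σ
    · simp [commId, mul_comm]
    · simp only [map_mul]
      generalize lift σ xw = x
      revert x
      decide
  show content p = content q
  ext a
  have key (w : Word) :
      lift (fun l => if l = a then (0 : ZMod 2) else 1) w = 0 ↔ a ∈ content w := by
    simp [lift_eq_prod, List.prod_eq_zero_iff]
  rw [← key, ← key, h (ZMod 2) hZ]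

theorem exists_letter_of_not_subset_regularIds {V : SgVariety} (h : ¬ V.th ⊆ regularIds) :
    ∃ u v k, (u, v) ∈ V.th ∧ k ∈ content u ∧ k ∉ content v := by
  obtain ⟨⟨u, v⟩, huv, hne⟩ := Set.not_subset.1 h
  by_cases hvu : content v ⊆ content u
  · obtain ⟨k, hku, hkv⟩ := Finset.exists_of_ssubset (hvu.ssubset_of_ne (Ne.symm hne))
    exact ⟨u, v, k, huv, hku, hkv⟩
  · obtain ⟨k, hkv, hku⟩ := Finset.not_subset.1 hvu
    exact ⟨v, u, k, V.symm_mem huv, hkv, hku⟩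

theorem th_eq_univ_of_mem_xw_yw {V : SgVariety} (h : (xw, yw) ∈ V.th) : V.th = Set.univ := by
  refine Set.eq_univ_of_forall fun e => SgVariety.mem_th.2 fun T _ hT σ => ?_
  have hall : ∀ a b : T, a = b := fun a b => by
    simpa [xw, yw] using hT _ h fun n => if n = 0 then a else b
  exact hall _ _

/-- Substituting `k ↦ xy` and `y` for the other letters turns `u = v` into `xy = y`, up to
regular identities. -/
theorem th_eq_univ_of_regularIds_subset {V : SgVariety} (hreg : regularIds ⊆ V.th) {u v : Word}
    {k : ℕ} (huv : (u, v) ∈ V.th) (hku : k ∈ content u) (hkv : k ∉ content v) :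
    V.th = Set.univ := by
  classical
  set θ : ℕ → Word := fun l => if l = k then xw * yw else yw
  have hu : (xw * yw, lift θ u) ∈ V.th := hreg <| by
    ext a
    simp only [mem_content_lift, content_mul, θ]
    constructor
    · intro ha
      exact ⟨k, hku, by simpa using ha⟩
    · rintro ⟨l, -, hl⟩
      split_ifs at hl <;> simp_all
  have hv : (lift θ v, yw) ∈ V.th := hreg <| by
    ext a
    simp only [mem_content_lift, θ]
    constructor
    · rintro ⟨l, hl, ha⟩
      rwa [if_neg (by rintro rfl; exact hkv hl)] at ha
    · intro ha
      obtain ⟨l, hl⟩ := content_nonempty v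
      exact ⟨l, hl, by rwa [if_neg (by rintro rfl; exact hkv hl)]⟩
  have hxy : (xw * yw, yw) ∈ V.th :=
    V.trans_mem (V.trans_mem hu (V.lift_mem huv θ)) hv
  have hyx : (yw * xw, xw) ∈ V.th := by
    simpa [xw, yw] using V.lift_mem hxy fun l => if l = 0 then yw else xw
  have hcomm : (xw * yw, yw * xw) ∈ V.th := hreg (by simp [xw, yw, Finset.union_comm])
  exact th_eq_univ_of_mem_xw_yw (V.trans_mem (V.symm_mem hyx) (V.trans_mem (V.symm_mem hcomm) hxy))

instance : OrderBot ComVariety where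
  bot := Tcom
  bot_le _ := (Set.subset_univ _).trans (subset_eqTh _)

namespace ComVariety

theorem th_bot : (⊥ : ComVariety).1.th = Set.univ :=
  Set.eq_univ_of_univ_subset (subset_eqTh _)

theorem ext_th {x y : ComVariety} (h : x.1.th = y.1.th) : x = y :=
  Subtype.ext (SgVariety.ext' h)

theorem SLcom_le_iff {x : ComVariety} : SLcom ≤ x ↔ x.1.th ⊆ regularIds := by
  change x.1.th ⊆ SLvar.th ↔ _
  rw [th_SLvar]

theorem isAtom_SLcom : IsAtom SLcom := by
  refine ⟨fun h => ?_, fun b hb => ext_th ?_⟩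
  · have : (xw, yw) ∈ SLcom.1.th := by rw [h, th_bot]; trivial
    simp [SLcom, th_SLvar, xw, yw] at this
  · obtain ⟨u, v, k, huv, hku, hkv⟩ :=
      exists_letter_of_not_subset_regularIds (mt SLcom_le_iff.2 hb.not_ge)
    rw [th_bot]
    exact th_eq_univ_of_regularIds_subset (th_SLvar ▸ hb.le) huv hku hkv

end ComVariety

theorem coe_lift_ite {T : Type} [CommSemigroup T] (A B : T) (k : ℕ) (w : Word) :
    ((lift (fun l => if l = k then A * B else B) w : T) : WithOne T)
      = (A : WithOne T) ^ (letters w).count k * (B : WithOne T) ^ (letters w).length := by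
  have hpt : ∀ l, ((if l = k then A * B else B : T) : WithOne T)
      = (if l = k then (A : WithOne T) else 1) * (B : WithOne T) := fun l => by
    split_ifs <;> simp
  rw [coe_lift_eq_prod, List.map_congr_left fun l _ => hpt l, List.prod_map_mul,
    List.prod_map_eq_pow_single k _ fun l hl _ => if_neg hl, if_pos rfl, List.map_const',
    List.prod_replicate]

/-- Substituting `k ↦ xy` and `y` for the other letters gives `xᵃ y^|u| = y^|v|`; taking `x = y`,
and `xy` for `x`, yields `xᵃ y^|v| = y^|v|`. -/
theorem pow_mul_pow_eq_pow_of_satS {T : Type} [CommSemigroup T] {u v : Word} {k : ℕ}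
    (huv : SatS T (u, v)) (hkv : k ∉ content v) (A B : T) {Q : ℕ}
    (hQ : (letters v).length ≤ Q) :
    (A : WithOne T) ^ (letters u).count k * (B : WithOne T) ^ Q = (B : WithOne T) ^ Q := by
  set a := (letters u).count k
  set m := (letters v).length
  have base : ∀ A B : T, (A : WithOne T) ^ a * (B : WithOne T) ^ (letters u).length
      = (B : WithOne T) ^ m := fun A B => by
    have := congrArg ((↑) : T → WithOne T) (huv fun l => if l = k then A * B else B)
    rwa [coe_lift_ite, coe_lift_ite, List.count_eq_zero.2 (mt mem_content.2 hkv), pow_zero,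
      one_mul] at this
  have h₁ : (B : WithOne T) ^ (a + (letters u).length) = (B : WithOne T) ^ m := by
    rw [pow_add]; exact base B B
  have h₂ : (A : WithOne T) ^ a * (B : WithOne T) ^ (a + (letters u).length)
      = (B : WithOne T) ^ m := by
    simpa [mul_pow, pow_add, mul_assoc] using base (A * B) B
  obtain ⟨n, rfl⟩ := Nat.exists_eq_add_of_le hQ
  rw [pow_add, ← mul_assoc, ← h₁, h₂, h₁]

theorem absorption_mem_th {V : SgVariety} (hV : commId ∈ V.th) {u v : Word} {k : ℕ}
    (huv : (u, v) ∈ V.th) (hkv : k ∉ content v) {n : ℕ} (hn : (letters u).count k ∣ n)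
    (hn₀ : 0 < n) {Q : ℕ} (hQ : (letters v).length ≤ Q + 1) :
    (spow xw (n - 1) * spow yw Q, spow yw Q) ∈ V.th := by
  refine SgVariety.mem_th.2 fun T _ hT σ => ?_
  let := (hT _ hV).commSemigroup
  obtain ⟨c, rfl⟩ := hn
  have hc : 0 < c := Nat.pos_of_mul_pos_left hn₀
  apply WithOne.coe_injective
  have := pow_mul_pow_eq_pow_of_satS (hT _ huv) hkv (spow (lift σ xw) (c - 1)) (lift σ yw) hQ
  simp only [map_mul, lift_spow, WithOne.coe_mul, coe_spow, ← pow_mul, Nat.sub_one_add_one hc.ne',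
    Nat.sub_one_add_one hn₀.ne'] at this ⊢
  simpa only [mul_comm] using this

theorem ComVariety.supPrime_SLcom : SupPrime SLcom := by
  refine ⟨fun h => isAtom_SLcom.1 (isMin_iff_eq_bot.1 h), fun x y hxy => ?_⟩
  by_contra! hne
  obtain ⟨u₁, v₁, k₁, h₁, hku₁, hkv₁⟩ :=
    exists_letter_of_not_subset_regularIds (mt SLcom_le_iff.2 hne.1)
  obtain ⟨u₂, v₂, k₂, h₂, hku₂, hkv₂⟩ :=
    exists_letter_of_not_subset_regularIds (mt SLcom_le_iff.2 hne.2)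
  set n := (letters u₁).count k₁ * (letters u₂).count k₂
  set Q := (letters v₁).length + (letters v₂).length
  have hn : 0 < n := Nat.mul_pos (List.count_pos_iff.2 (mem_content.1 hku₁))
    (List.count_pos_iff.2 (mem_content.1 hku₂))
  have hmem : (spow xw (n - 1) * spow yw Q, spow yw Q) ∈ (x ⊔ y).1.th :=
    ⟨absorption_mem_th x.2 h₁ hkv₁ (dvd_mul_right _ _) hn (by omega),
      absorption_mem_th y.2 h₂ hkv₂ (dvd_mul_left _ _) hn (by omega)⟩
  have := SLcom_le_iff.1 hxy hmem
  simp [xw, yw] at this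

section OutsideSubstitution

variable (S : Finset ℕ) (g : Word)

def substOutside : ℕ → Word := fun l => if l ∈ S then of l else g

theorem coe_lift_lift_substOutside {T : Type} [CommSemigroup T] (σ : ℕ → T) (w : Word) :
    ((lift σ (lift (substOutside S g) w) : T) : WithOne T)
      = (((letters w).filter (· ∈ S)).map fun l => (σ l : WithOne T)).prod
        * ((lift σ g : T) : WithOne T) ^ ((letters w).filter (· ∉ S)).length := by
  rw [lift_lift, coe_lift_eq_prod]
  have hpt : ∀ l, ((lift σ (substOutside S g l) : T) : WithOne T)
      = if l ∈ S then (σ l : WithOne T) else ((lift σ g : T) : WithOne T) := fun _ => by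
    unfold substOutside; split_ifs <;> simp
  simp only [hpt, List.prod_map_ite, List.map_const', List.prod_replicate]

theorem content_lift_substOutside {w : Word} (h : ¬ content w ⊆ S) :
    content (lift (substOutside S g) w) = (content w).filter (· ∈ S) ∪ content g := by
  obtain ⟨k, hkw, hkS⟩ := Finset.not_subset.1 h
  ext a
  simp only [mem_content_lift, substOutside, Finset.mem_union, Finset.mem_filter]
  constructor
  · rintro ⟨l, hl, ha⟩
    split_ifs at ha with hlS
    · simp only [content_of, Finset.mem_singleton] at ha
      exact .inl (ha ▸ ⟨hl, hlS⟩)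
    · exact .inr ha
  · rintro (⟨ha, haS⟩ | ha)
    · exact ⟨a, ha, by simp [haS]⟩
    · exact ⟨k, hkw, by simpa [hkS] using ha⟩

theorem lift_substOutside_of_subset {w : Word} (h : content w ⊆ S) :
    lift (substOutside S g) w = w :=
  lift_eq_self fun _ hl => if_pos (h hl)

end OutsideSubstitution

section Absorption

variable {Y : SgVariety} {T : Type} [CommSemigroup T]

/-- Substitute `z ^ (t + 1)` for the letters of `w` outside `c(w')`: for both choices of `z`, this
turns `w = w'` into a regular identity `z = …` or `… = z`. -/
theorem exists_eq_mul_pow_of_mem (hY : ∀ e ∈ Y.th, e ∈ regularIds → SatS T e) {w w' z : Word}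
    (hww' : (w, w') ∈ Y.th) {k : ℕ} (hkw : k ∈ content w) (hkw' : k ∉ content w')
    (hz : z = w ∨ z = w') (σ : ℕ → T) (t : ℕ) :
    ∃ C : WithOne T, ∃ R ≥ t,
      ((lift σ z : T) : WithOne T) = C * ((lift σ z : T) : WithOne T) ^ R := by
  set θ := substOutside (content w') (spow z t)
  have hnot : ¬ content w ⊆ content w' := fun h => hkw' (h hkw)
  have hmem : (lift θ w, w') ∈ Y.th := by
    simpa [θ, lift_substOutside_of_subset] using Y.lift_mem hww' θ
  have hcont := content_lift_substOutside (content w') (spow z t) hnot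
  have heq : lift σ z = lift σ (lift θ w) := by
    rcases hz with rfl | rfl
    · refine hY _ (Y.trans_mem hww' (Y.symm_mem hmem)) ?_ σ
      rw [mem_regularIds, hcont, content_spow, Finset.union_eq_right.2 (Finset.filter_subset _ _)]
    · refine (hY _ hmem ?_ σ).symm
      rw [mem_regularIds, hcont, content_spow, Finset.union_eq_right]
      exact fun a ha => (Finset.mem_filter.1 ha).2
  have hpos : 0 < ((letters w).filter (· ∉ content w')).length :=
    List.length_pos_of_mem (List.mem_filter.2 ⟨mem_content.1 hkw, by simpa using hkw'⟩)
  refine ⟨(((letters w).filter (· ∈ content w')).map fun l => (σ l : WithOne T)).prod,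
    (t + 1) * ((letters w).filter (· ∉ content w')).length,
    le_trans (Nat.le_succ t) (Nat.le_mul_of_pos_right _ hpos), ?_⟩
  conv_lhs => rw [heq, coe_lift_lift_substOutside, lift_spow, coe_spow, ← pow_mul]

theorem mul_pow_eq_of_eq_mul_pow {a m : ℕ}
    (habs : ∀ (A B : T) (Q : ℕ), m ≤ Q →
      (A : WithOne T) ^ a * (B : WithOne T) ^ Q = (B : WithOne T) ^ Q)
    {Z : T} {C : WithOne T} {R : ℕ} (hR : m ≤ R)
    (hZ : (Z : WithOne T) = C * (Z : WithOne T) ^ R) (A : T) :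
    (Z : WithOne T) * (A : WithOne T) ^ a = Z := by
  rw [hZ, mul_assoc, mul_comm (_ ^ R), habs A Z R hR]

/-- Both `u` and `v` absorb `(uv) ^ a`, and `u (uv) ^ a = v (uv) ^ a` is a regular identity
of `Y`. -/
theorem satS_of_mem_th_of_letter {u₀ v₀ : Word} {k₀ : ℕ} (hX : SatS T (u₀, v₀))
    (hk₀ : k₀ ∈ content u₀) (hk₀' : k₀ ∉ content v₀)
    (hY : ∀ e ∈ Y.th, e ∈ regularIds → SatS T e) {u v : Word} (huv : (u, v) ∈ Y.th) {k : ℕ}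
    (hku : k ∈ content u) (hkv : k ∉ content v) : SatS T (u, v) := by
  intro σ
  set a := (letters u₀).count k₀
  set m := (letters v₀).length
  have ha : 0 < a := List.count_pos_iff.2 (mem_content.1 hk₀)
  have habs := fun A B Q => pow_mul_pow_eq_pow_of_satS (Q := Q) hX hk₀' A B
  have hU : ∀ A : T, ((lift σ u : T) : WithOne T) * (A : WithOne T) ^ a = lift σ u := by
    obtain ⟨C, R, hR, hC⟩ := exists_eq_mul_pow_of_mem hY huv hku hkv (.inl rfl) σ m
    exact mul_pow_eq_of_eq_mul_pow habs hR hC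
  have hV : ∀ A : T, ((lift σ v : T) : WithOne T) * (A : WithOne T) ^ a = lift σ v := by
    obtain ⟨C, R, hR, hC⟩ := exists_eq_mul_pow_of_mem hY huv hku hkv (.inr rfl) σ m
    exact mul_pow_eq_of_eq_mul_pow habs hR hC
  set g := spow (u * v) (a - 1)
  have hpad := hY _ (Y.mul_mem huv (Y.refl_mem g)) (by
    ext
    simp only [content_mul, content_spow, g, Finset.mem_union]
    tauto) σ
  have hpad' := congrArg ((↑) : T → WithOne T) hpad
  simp only [map_mul, WithOne.coe_mul, g, lift_spow, coe_spow, Nat.sub_one_add_one ha.ne'] at hpad'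
  apply WithOne.coe_injective
  rw [← hU (lift σ (u * v)), ← hV (lift σ (u * v))]
  simpa only [map_mul, WithOne.coe_mul] using hpad'

theorem satS_of_mem_th {u₀ v₀ : Word} {k₀ : ℕ} (hX : SatS T (u₀, v₀))
    (hk₀ : k₀ ∈ content u₀) (hk₀' : k₀ ∉ content v₀)
    (hY : ∀ e ∈ Y.th, e ∈ regularIds → SatS T e) {u v : Word} (huv : (u, v) ∈ Y.th) :
    SatS T (u, v) := by
  by_cases hreg : content u = content v
  · exact hY _ huv hreg
  by_cases hvu : content v ⊆ content u
  · obtain ⟨k, hku, hkv⟩ := Finset.exists_of_ssubset (hvu.ssubset_of_ne (Ne.symm hreg))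
    exact satS_of_mem_th_of_letter hX hk₀ hk₀' hY huv hku hkv
  · obtain ⟨k, hkv, hku⟩ := Finset.not_subset.1 hvu
    exact fun σ => (satS_of_mem_th_of_letter hX hk₀ hk₀' hY (Y.symm_mem huv) hkv hku σ).symm

end Absorption

section Derivations

variable (V W : SgVariety)

def StepIn (p q : Word) : Prop := (p, q) ∈ V.th ∨ (p, q) ∈ W.th

variable {V W}

theorem StepIn.symm {p q : Word} (h : StepIn V W p q) : StepIn V W q p :=
  h.imp V.symm_mem W.symm_mem

theorem StepIn.mul {p q p' q' : Word} (h : StepIn V W p q) (h' : (p', q') ∈ V.th ∩ W.th) :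
    StepIn V W (p * p') (q * q') :=
  h.imp (V.mul_mem · h'.1) (W.mul_mem · h'.2)

def derivCon (V W : SgVariety) : Con Word where
  r := Relation.ReflTransGen (StepIn V W)
  iseqv := by
    refine ⟨fun _ => .refl, fun h => ?_, .trans⟩
    induction h with
    | refl => exact .refl
    | tail _ hbc ih => exact .head hbc.symm ih
  mul' {p q p' q'} h h' := by
    refine .trans (h.lift (· * p') fun a b hab => hab.mul ⟨V.refl_mem p', W.refl_mem p'⟩) ?_
    refine h'.lift (q * ·) fun a b hab => ?_
    rcases hab with hab | hab
    · exact .inl (V.mul_mem (V.refl_mem q) hab)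
    · exact .inr (W.mul_mem (W.refl_mem q) hab)

/-- Birkhoff's completeness theorem: words modulo derivability form a model of `V.th ∪ W.th`. -/
theorem reflTransGen_stepIn_of_mem {p q : Word} (h : (p, q) ∈ eqTh (V.th ∪ W.th)) :
    Relation.ReflTransGen (StepIn V W) p q := by
  set c := derivCon V W
  have hval : ∀ (θ : ℕ → Word) (w : Word), lift (fun l => (θ l : c.Quotient)) w = lift θ w := by
    intro θ w
    induction w using FreeSemigroup.recOnMul with
    | ih1 x => rfl
    | ih2 x y hx hy => rw [map_mul, map_mul, hx, hy, Con.coe_mul]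
  have hmod : Models c.Quotient (V.th ∪ W.th) := by
    intro e he σ
    choose θ hθ using fun l => Con.induction_on (C := fun z => ∃ w : Word, (w : c.Quotient) = z)
      (σ l) fun w => ⟨w, rfl⟩
    obtain rfl : (fun l => (θ l : c.Quotient)) = σ := funext hθ
    rw [hval, hval, Con.eq]
    exact .single (he.imp (V.lift_mem · θ) (W.lift_mem · θ))
  have := h _ hmod fun l => (of l : c.Quotient)
  rwa [hval, hval, lift_eq_self (fun _ _ => rfl), lift_eq_self (fun _ _ => rfl), Con.eq] at this

end Derivations

section InsertSubstitution

variable (k : ℕ) (g : Word)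

def substInsert : ℕ → Word := fun l => if l = k then of k * g else of l

theorem coe_lift_lift_substInsert {T : Type} [CommSemigroup T] (σ : ℕ → T) (w : Word) :
    ((lift σ (lift (substInsert k g) w) : T) : WithOne T)
      = ((lift σ w : T) : WithOne T) * ((lift σ g : T) : WithOne T) ^ (letters w).count k := by
  have hpt : ∀ l, ((lift σ (substInsert k g l) : T) : WithOne T)
      = (σ l : WithOne T) * if l = k then ((lift σ g : T) : WithOne T) else 1 := fun l => by
    unfold substInsert; split_ifs with h <;> simp [h]
  rw [lift_lift, coe_lift_eq_prod, coe_lift_eq_prod, List.map_congr_left fun l _ => hpt l,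
    List.prod_map_mul, List.prod_map_eq_pow_single k _ fun l hl _ => if_neg hl, if_pos rfl]

theorem content_lift_substInsert {w : Word} (hk : k ∈ content w) :
    content (lift (substInsert k g) w) = content w ∪ content g := by
  ext a
  simp only [mem_content_lift, substInsert, Finset.mem_union]
  constructor
  · rintro ⟨l, hl, ha⟩
    split_ifs at ha with hlk
    · rw [content_mul, content_of, Finset.mem_union, Finset.mem_singleton] at ha
      exact ha.imp_left fun h => by rwa [h, ← hlk]
    · simp only [content_of, Finset.mem_singleton] at ha
      exact .inl (ha ▸ hl)
  · rintro (ha | ha)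
    · exact ⟨a, ha, by split_ifs with h <;> simp [h]⟩
    · exact ⟨k, hk, by simp [ha]⟩

theorem lift_substInsert_of_not_mem {w : Word} (h : k ∉ content w) :
    lift (substInsert k g) w = w :=
  lift_eq_self fun _ hl => if_neg (by rintro rfl; exact h hl)

end InsertSubstitution

section MeetSemilatticeCase

variable {V W : SgVariety}

/-- Substituting `k ↦ k m ^ j` in `w = w'` shows that `w` equals `w (k ↦ k m ^ j)`, a word of the
same content, which by commutativity has the value of `w m ^ (N + 1)`. -/
theorem mem_eqTh_mul_spow_of_mem (hV : commId ∈ V.th) {w w' : Word} (hww' : (w, w') ∈ W.th)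
    {k : ℕ} (hkw : k ∈ content w) (hkw' : k ∉ content w') {m : Word}
    (hm : content m ⊆ content w) {N : ℕ} (hN : (letters w).count k ∣ N + 1) :
    (w, w * spow m N) ∈ eqTh (V.th ∪ (W.th ∩ regularIds)) := by
  obtain ⟨j, hj⟩ := hN
  have hj₀ : j ≠ 0 := by rintro rfl; simp at hj
  set θ := substInsert k (spow m (j - 1))
  have hθ : (w, lift θ w) ∈ W.th := W.trans_mem hww' <| W.symm_mem <| by
    simpa [θ, lift_substInsert_of_not_mem _ _ hkw'] using W.lift_mem hww' θ
  have hcont : content w = content (lift θ w) := by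
    rw [content_lift_substInsert _ _ hkw, content_spow, Finset.union_eq_left.2 hm]
  refine eqTh_trans (subset_eqTh _ (.inr ⟨hθ, hcont⟩)) fun T _ hT σ => ?_
  let := (hT _ (.inl hV)).commSemigroup
  apply WithOne.coe_injective
  simp only [θ, coe_lift_lift_substInsert, map_mul, WithOne.coe_mul, lift_spow, coe_spow, ← pow_mul,
    hj, Nat.sub_one_add_one hj₀, mul_comm j]

def AbsorbsPowers (E : Set SgId) (p w : Word) : Prop :=
  ∃ e > 0, ∀ N, e ∣ N + 1 → (w, w * spow p N) ∈ eqTh E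

theorem AbsorbsPowers.of_mem_eqTh {E : Set SgId} {p w w' : Word} (h : AbsorbsPowers E p w')
    (hww' : (w, w') ∈ eqTh E) : AbsorbsPowers E p w := by
  obtain ⟨e, he, hN⟩ := h
  refine ⟨e, he, fun N hdvd => eqTh_trans hww' (eqTh_trans (hN N hdvd) ?_)⟩
  exact eqTh_mul (eqTh_symm hww') (eqTh_refl _)

theorem AbsorbsPowers.mem_eqTh {E : Set SgId} {p w w' : Word} (h : AbsorbsPowers E p w)
    (h' : AbsorbsPowers E p w') (hpad : ∀ N, (w * spow p N, w' * spow p N) ∈ eqTh E) :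
    (w, w') ∈ eqTh E := by
  obtain ⟨e, he, hN⟩ := h
  obtain ⟨e', he', hN'⟩ := h'
  have hee' : e * e' - 1 + 1 = e * e' := Nat.sub_one_add_one (Nat.mul_pos he he').ne'
  refine eqTh_trans (hN _ ⟨e', hee'⟩) (eqTh_trans (hpad _) (eqTh_symm (hN' _ ⟨e, ?_⟩)))
  rw [hee', mul_comm]

theorem StepIn.mem_eqTh_of_content_eq {c d : Word} (h : StepIn V W c d)
    (hcd : content c = content d) : (c, d) ∈ eqTh (V.th ∪ (W.th ∩ regularIds)) :=
  subset_eqTh _ (h.imp id (⟨·, hcd⟩))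

theorem StepIn.mem_right_of_content_ne (hVreg : V.th ⊆ regularIds) {c d : Word}
    (h : StepIn V W c d) (hcd : content c ≠ content d) : (c, d) ∈ W.th :=
  h.resolve_left fun hV => hcd (hVreg hV)

theorem StepIn.absorbsPowers (hV : commId ∈ V.th) (hVreg : V.th ⊆ regularIds) {p c d : Word}
    (h : StepIn V W c d) (hc : content c = content p) (hd : content d ⊆ content p)
    (hcd : content d ≠ content p) : AbsorbsPowers (V.th ∪ (W.th ∩ regularIds)) p c := by
  obtain ⟨k, hkc, hkd⟩ := Finset.exists_of_ssubset (hd.ssubset_of_ne hcd)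
  rw [← hc] at hkc
  exact ⟨_, List.count_pos_iff.2 (mem_content.1 hkc), fun N hN =>
    mem_eqTh_mul_spow_of_mem hV (h.mem_right_of_content_ne hVreg (hc ▸ hcd.symm)) hkc hkd
      hc.symm.subset hN⟩

theorem StepIn.mem_eqTh_mul_spow {p c d : Word} (h : StepIn V W c d)
    (hc : content c ⊆ content p) (hd : content d ⊆ content p) (N : ℕ) :
    (c * spow p N, d * spow p N) ∈ eqTh (V.th ∪ (W.th ∩ regularIds)) := by
  refine StepIn.mem_eqTh_of_content_eq (h.mul ⟨V.refl_mem _, W.refl_mem _⟩) ?_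
  rw [content_mul, content_mul, content_spow, Finset.union_eq_right.2 hc,
    Finset.union_eq_right.2 hd]

theorem reflTransGen_stepIn_invariant (hV : commId ∈ V.th) (hVreg : V.th ⊆ regularIds) {p c : Word}
    (h : Relation.ReflTransGen
      (fun c d => StepIn V W c d ∧ content c ⊆ content p ∧ content d ⊆ content p) p c) :
    (∀ N, (p * spow p N, c * spow p N) ∈ eqTh (V.th ∪ (W.th ∩ regularIds))) ∧
      (content c = content p → (p, c) ∈ eqTh (V.th ∪ (W.th ∩ regularIds))) ∧
      (content c ≠ content p → AbsorbsPowers (V.th ∪ (W.th ∩ regularIds)) p p) := by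
  induction h with
  | refl => exact ⟨fun _ => eqTh_refl _, fun _ => eqTh_refl _, fun h => absurd rfl h⟩
  | @tail c d _ hcd ih =>
    obtain ⟨hstep, hc, hd⟩ := hcd
    obtain ⟨ihpad, ihfull, ihabs⟩ := ih
    have hpad N := eqTh_trans (ihpad N) (hstep.mem_eqTh_mul_spow hc hd N)
    refine ⟨hpad, fun hdp => ?_, fun hdp => ?_⟩
    · by_cases hcp : content c = content p
      · exact eqTh_trans (ihfull hcp) (hstep.mem_eqTh_of_content_eq (hcp.trans hdp.symm))
      · exact (ihabs hcp).mem_eqTh (hstep.symm.absorbsPowers hV hVreg hdp hc hcp) hpad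
    · by_cases hcp : content c = content p
      · exact (hstep.absorbsPowers hV hVreg hcp hd hdp).of_mem_eqTh (ihfull hcp)
      · exact ihabs hcp

/-- Identifying the letters outside `c(p)` with a letter of `p` keeps the contents of all words of
the derivation inside `c(p)`. -/
theorem mem_eqTh_inter_regularIds (hV : commId ∈ V.th) (hVreg : V.th ⊆ regularIds) {p q : Word}
    (hpq : (p, q) ∈ eqTh (V.th ∪ W.th)) (hcont : content p = content q) :
    (p, q) ∈ eqTh (V.th ∪ (W.th ∩ regularIds)) := by
  set ψ := substOutside (content p) (of p.head)
  have hψ : ∀ w, content (lift ψ w) ⊆ content p := fun w a ha => by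
    obtain ⟨l, -, hl⟩ := mem_content_lift.1 ha
    simp only [ψ, substOutside] at hl
    split_ifs at hl with h <;> simp only [content_of, Finset.mem_singleton] at hl <;> subst hl
    exacts [h, mem_content.2 List.mem_cons_self]
  have hchain : Relation.ReflTransGen
      (fun c d => StepIn V W c d ∧ content c ⊆ content p ∧ content d ⊆ content p)
      (lift ψ p) (lift ψ q) :=
    (reflTransGen_stepIn_of_mem hpq).lift (lift ψ) fun c d h =>
      ⟨h.imp (V.lift_mem · ψ) (W.lift_mem · ψ), hψ c, hψ d⟩
  rw [lift_substOutside_of_subset _ _ subset_rfl,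
    lift_substOutside_of_subset _ _ hcont.symm.subset] at hchain
  exact (reflTransGen_stepIn_invariant hV hVreg hchain).2.1 hcont.symm

end MeetSemilatticeCase

namespace ComVariety

theorem inf_sup_SLcom_of_not_le {x : ComVariety} (hx : ¬ SLcom ≤ x) (y : ComVariety) :
    x ⊓ (y ⊔ SLcom) = x ⊓ y := by
  obtain ⟨u₀, v₀, k₀, h₀, hk₀, hk₀'⟩ :=
    exists_letter_of_not_subset_regularIds (mt SLcom_le_iff.2 hx)
  refine le_antisymm (fun e he => ?_) (inf_le_inf_left x le_sup_left)
  intro T _ hT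
  let := (hT _ (.inl x.2)).commSemigroup
  refine he T ?_
  rintro e' (he' | he')
  · exact hT _ (.inl he')
  · refine satS_of_mem_th (hT _ (.inl h₀)) hk₀ hk₀' (Y := y.1) (fun e he hreg => ?_) he'
    exact hT _ (.inr ⟨he, show e ∈ SLvar.th by rwa [th_SLvar]⟩)

theorem inf_sup_SLcom_of_le {x : ComVariety} (hx : SLcom ≤ x) (y : ComVariety) :
    x ⊓ (y ⊔ SLcom) = x ⊓ y ⊔ SLcom := by
  have hxreg := SLcom_le_iff.1 hx
  apply ext_th
  change eqTh (x.1.th ∪ (y.1.th ∩ SLvar.th)) = eqTh (x.1.th ∪ y.1.th) ∩ SLvar.th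
  rw [th_SLvar]
  refine Set.Subset.antisymm (Set.subset_inter ?_ ?_) fun ⟨p, q⟩ ⟨h, hreg⟩ =>
    mem_eqTh_inter_regularIds x.2 hxreg h hreg
  · exact eqTh_mono (Set.union_subset_union_right _ Set.inter_subset_left)
  · calc eqTh (x.1.th ∪ (y.1.th ∩ regularIds)) ⊆ eqTh regularIds :=
          eqTh_mono (Set.union_subset hxreg Set.inter_subset_right)
      _ = regularIds := by rw [← th_SLvar, SLvar.closed]

theorem inf_sup_SLcom (x y : ComVariety) : x ⊓ (y ⊔ SLcom) = x ⊓ y ⊔ x ⊓ SLcom := by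
  by_cases hx : SLcom ≤ x
  · rw [inf_sup_SLcom_of_le hx, inf_eq_right.2 hx]
  · rw [inf_sup_SLcom_of_not_le hx, (isAtom_SLcom.not_le_iff_disjoint.1 hx).symm.eq_bot,
      sup_bot_eq]

end ComVariety

/-- A commutative semigroup variety `V` is upper-modular in
**Com** iff `V ∨ SL` is; likewise for costandard. -/
theorem upperModular_and_costandard_join_SL (V : ComVariety) :
    (IsUpperModular V ↔ IsUpperModular (V ⊔ SLcom)) ∧
    (IsCostandard V ↔ IsCostandard (V ⊔ SLcom)) :=
  isUpperModular_and_isCostandard_sup_iff ComVariety.inf_sup_SLcom ComVariety.isAtom_SLcom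
    ComVariety.supPrime_SLcom V
end
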